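/- Let D be a positive integer and d_1, d_2, d_3 integers with d_1 + d_2 + d_3 = D. Let R = ℂ[z_1,z_2,z_3] with the (1/D)Z-grading deg z_i = 2d_i/D, let W = z_1z_2z_3, and for i = 1,2,3 (indices mod 3) let T_i be the (1/D)Z-graded matrix factorization of W given by R →(z_{i+1}z_{i+2}) R[1−2d_i/D] →(z_i) R. Let C_{d_1,d_2,d_3} be the full (1/D)Z-graded DG subcategory of matrix factorizations of W with objects T_1, T_2, T_3, and H*(C_{d_1,d_2,d_3}) its cohomology category. Set p_i = 2d_i + 2d_{i+1} − D and q_i = 2d_{i−2} + 2d_{i−1} − D (indices mod 3), and p̃_i = p_i/D, q̃_i = q_i/D. Then there is an equivalence of (1/D)Z-graded categories A_{(p̃,q̃)} ≅ H*(C_{d_1,d_2,d_3}) sending X_i to T_i, sending u_{i−1,i} to the class of the odd closed morphism T_{i−1} → T_i with components (multiplication by z_{i+1}, multiplication by −1), and sending v_{i,i−1} to the class of the odd closed morphism T_i → T_{i−1} with components (multiplication by z_{i−2}, multiplication by −1). -/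

import Mathlib

noncomputable section ACat

namespace ACat

/- The category `A` (for `n ≥ 3`) is modelled concretely as follows.  Objects are
`X_i`, `i ∈ ZMod n`.  The morphisms `X_i → X_j` have a basis consisting of the
nonzero alternating words in the generators `u_{·,·+1}`, `v_{·,·-1}`; a basis word
starting at the vertex `i` is encoded by an integer code `m`:
`m > 0` encodes the alternating word of length `m` whose first (rightmost) letter is
a `v`, `m < 0` encodes the word of length `-m` whose first letter is a `u`, and
`m = 0` encodes the identity.  Thus `x_i^a` has code `2a`, `y_i^a` has code `-2a`,
`v_{i,i-1} x_i^a` has code `2a+1` and `x_{i+1}^a u_{i,i+1}` has code `-(2a+1)`. -/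

variable (n : ℕ)

/-- The endpoint of the word with code `m` starting at vertex `i`. -/
def tau (i : ZMod n) (m : ℤ) : ZMod n :=
  if m % 2 = 0 then i else if 0 < m then i - 1 else i + 1

/-- Whether the last (leftmost) letter of the (nonempty) word with code `m` is a `v`. -/
def leftv (m : ℤ) : Prop := (0 < m ∧ m % 2 ≠ 0) ∨ (m < 0 ∧ m % 2 = 0)

instance (m : ℤ) : Decidable (leftv m) := by unfold leftv; infer_instance

/-- Composition of basis words at the level of codes: `cmul m₂ m₁` is the code of
`w₂ ∘ w₁` (`w₁` applied first), or `none` if the concatenated word is not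
alternating (in which case the composition is zero in `A`). -/
def cmul (m₂ m₁ : ℤ) : Option ℤ :=
  if m₁ = 0 then some m₂
  else if m₂ = 0 then some m₁
  else if (0 < m₂) ↔ ¬ leftv m₁ then
    some (if 0 < m₁ then m₁ + (m₂.natAbs : ℤ) else m₁ - (m₂.natAbs : ℤ))
  else none

variable (k : Type) [Field k]

/-- The space of morphisms `X_i → X_j` of `A`: the free `k`-module on the codes of
words from `i` to `j`. -/
abbrev AHom (i j : ZMod n) : Type := {c : ℤ // tau n i c = j} →₀ k

/-- Auxiliary: the basis morphism of an optional code. -/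
def obm (i j : ZMod n) : Option ℤ → AHom n k i j
  | none => 0
  | some r => if h : tau n i r = j then Finsupp.single ⟨r, h⟩ 1 else 0

/-- The basis-level composition. -/
def bm (i j : ZMod n) (m₂ m₁ : ℤ) : AHom n k i j := obm n k i j (cmul m₂ m₁)

/-- Composition in `A` (bilinear extension of `bm`). -/
def Acomp {i j l : ZMod n} (g : AHom n k j l) (f : AHom n k i j) : AHom n k i l :=
  f.sum fun m₁ c₁ => g.sum fun m₂ c₂ => (c₂ * c₁) • bm n k i l m₂.1 m₁.1

/-- The identity of `X_i` (the word of code `0`). -/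
def Aid (i : ZMod n) : AHom n k i i :=
  Finsupp.single ⟨0, by simp [tau]⟩ 1


variable {n k}

lemma tau_zero (i : ZMod n) : tau n i 0 = i := by simp [tau]

/-- Endpoint compatibility of the code-level composition. -/
lemma tau_cmul {m₂ m₁ r : ℤ} (i : ZMod n) (h : cmul m₂ m₁ = some r) :
    tau n i r = tau n (tau n i m₁) m₂ := by
  unfold cmul at h
  by_cases h1 : m₁ = 0
  · rw [if_pos h1] at h
    obtain rfl : m₂ = r := by injection h
    subst h1; simp [tau]
  rw [if_neg h1] at h
  by_cases h2 : m₂ = 0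
  · rw [if_pos h2] at h
    obtain rfl : m₁ = r := by injection h
    subst h2; simp [tau]
  rw [if_neg h2] at h
  by_cases h3 : (0 < m₂) ↔ ¬ leftv m₁
  · rw [if_pos h3] at h
    obtain rfl : (if 0 < m₁ then m₁ + (m₂.natAbs : ℤ) else m₁ - (m₂.natAbs : ℤ)) = r := by
      injection h
    unfold leftv at h3
    unfold tau
    split_ifs <;> (first | rfl | (exfalso; omega) | ring)
  · rw [if_neg h3] at h; exact absurd h (by simp)


lemma Acomp_zero_right {i j l : ZMod n} (g : AHom n k j l) :
    Acomp n k g (0 : AHom n k i j) = 0 := by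
  simp [Acomp]

lemma Acomp_zero_left {i j l : ZMod n} (f : AHom n k i j) :
    Acomp n k (0 : AHom n k j l) f = 0 := by
  simp [Acomp]

lemma Acomp_add_left {i j l : ZMod n} (g g' : AHom n k j l) (f : AHom n k i j) :
    Acomp n k (g + g') f = Acomp n k g f + Acomp n k g' f := by
  unfold Acomp
  rw [← Finsupp.sum_add]
  refine Finsupp.sum_congr fun m₁ _ => ?_
  rw [Finsupp.sum_add_index' (fun m₂ => by simp) (fun m₂ c c' => by rw [add_mul, add_smul])]

lemma Acomp_add_right {i j l : ZMod n} (g : AHom n k j l) (f f' : AHom n k i j) :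
    Acomp n k g (f + f') = Acomp n k g f + Acomp n k g f' := by
  unfold Acomp
  rw [Finsupp.sum_add_index' (fun m₁ => by simp) (fun m₁ c c' => ?_)]
  rw [← Finsupp.sum_add]
  refine Finsupp.sum_congr fun m₂ _ => ?_
  rw [mul_add, add_smul]

lemma Acomp_smul_left {i j l : ZMod n} (c : k) (g : AHom n k j l) (f : AHom n k i j) :
    Acomp n k (c • g) f = c • Acomp n k g f := by
  unfold Acomp
  rw [Finsupp.smul_sum]
  refine Finsupp.sum_congr fun m₁ _ => ?_
  rw [Finsupp.sum_smul_index' (fun m₂ => by simp), Finsupp.smul_sum]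
  refine Finsupp.sum_congr fun m₂ _ => ?_
  simp only [smul_eq_mul, smul_smul]
  congr 1
  ring

lemma Acomp_smul_right {i j l : ZMod n} (c : k) (g : AHom n k j l) (f : AHom n k i j) :
    Acomp n k g (c • f) = c • Acomp n k g f := by
  unfold Acomp
  rw [Finsupp.sum_smul_index' (fun m₁ => by simp), Finsupp.smul_sum]
  refine Finsupp.sum_congr fun m₁ _ => ?_
  rw [Finsupp.smul_sum]
  refine Finsupp.sum_congr fun m₂ _ => ?_
  simp only [smul_eq_mul, smul_smul]
  congr 1
  ring

lemma Acomp_single_single {i j l : ZMod n} (b₂ : {c : ℤ // tau n j c = l})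
    (b₁ : {c : ℤ // tau n i c = j}) (c₂ c₁ : k) :
    Acomp n k (Finsupp.single b₂ c₂) (Finsupp.single b₁ c₁)
      = (c₂ * c₁) • bm n k i l b₂.1 b₁.1 := by
  unfold Acomp
  rw [Finsupp.sum_single_index (by simp), Finsupp.sum_single_index (by simp)]

lemma cmul_zero_right (m : ℤ) : cmul m 0 = some m := by simp [cmul]

lemma cmul_zero_left (m : ℤ) : cmul 0 m = some m := by
  unfold cmul
  split_ifs with h1 h2 <;> simp_all

lemma Aid_comp {i j : ZMod n} (f : AHom n k i j) : Acomp n k (Aid n k j) f = f := by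
  unfold Acomp Aid
  conv_rhs => rw [← f.sum_single]
  refine Finsupp.sum_congr fun m₁ hm₁ => ?_
  rw [Finsupp.sum_single_index (by simp)]
  rw [one_mul, bm, cmul_zero_left, obm]
  rw [dif_pos m₁.2]
  simp

lemma Acomp_id {i j : ZMod n} (f : AHom n k i j) : Acomp n k f (Aid n k i) = f := by
  unfold Acomp Aid
  rw [Finsupp.sum_single_index (by simp)]
  conv_rhs => rw [← f.sum_single]
  refine Finsupp.sum_congr fun m₂ hm₂ => ?_
  rw [mul_one, bm, cmul_zero_right, obm]
  rw [dif_pos m₂.2]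
  simp


@[simp] lemma obm_none (i j : ZMod n) : obm n k i j none = 0 := rfl

lemma obm_some (i j : ZMod n) (r : ℤ) :
    obm n k i j (some r)
      = if h : tau n i r = j then Finsupp.single ⟨r, h⟩ (1 : k) else 0 := rfl

set_option maxHeartbeats 1000000 in
lemma cmul_assoc (m₃ m₂ m₁ : ℤ) :
    (cmul m₃ m₂).bind (fun r => cmul r m₁) = (cmul m₂ m₁).bind (fun r => cmul m₃ r) := by
  by_cases h1 : m₁ = 0
  · subst h1; simp [cmul_zero_right]
  by_cases h2 : m₂ = 0
  · subst h2; simp [cmul_zero_left, cmul_zero_right]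
  by_cases h3 : m₃ = 0
  · subst h3; simp [cmul_zero_left]
  simp only [cmul, leftv, iff_iff_and_or_not_and_not]
  split_ifs <;>
    (try simp only [Option.bind_none, Option.bind_some]) <;>
    (try split_ifs) <;>
    (first | rfl | (exfalso; omega) | (congr 1; omega) | omega)

lemma bm_assoc {i j l w : ZMod n} (b₁ : {c : ℤ // tau n i c = j})
    (b₂ : {c : ℤ // tau n j c = l}) (b₃ : {c : ℤ // tau n l c = w}) :
    Acomp n k (bm n k j w b₃.1 b₂.1) (Finsupp.single b₁ 1) =
      Acomp n k (Finsupp.single b₃ 1) (bm n k i l b₂.1 b₁.1) := by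
  have hmain := cmul_assoc b₃.1 b₂.1 b₁.1
  unfold bm
  rcases ho : cmul b₃.1 b₂.1 with _ | r
  · rcases ho' : cmul b₂.1 b₁.1 with _ | r'
    · rw [obm_none, obm_none, Acomp_zero_left, Acomp_zero_right]
    · rw [obm_none, Acomp_zero_left, obm_some]
      have ht : tau n i r' = l := by rw [tau_cmul i ho', b₁.2, b₂.2]
      rw [dif_pos ht, Acomp_single_single, one_mul, one_smul]
      unfold bm
      have hnone : cmul b₃.1 r' = none := by
        rw [ho, ho'] at hmain; simpa using hmain.symm
      rw [hnone, obm_none]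
  · have ht : tau n j r = w := by rw [tau_cmul j ho, b₂.2, b₃.2]
    rw [obm_some, dif_pos ht, Acomp_single_single, one_mul, one_smul]
    rcases ho' : cmul b₂.1 b₁.1 with _ | r'
    · rw [obm_none, Acomp_zero_right]
      unfold bm
      have hnone : cmul r b₁.1 = none := by rw [ho, ho'] at hmain; simpa using hmain
      rw [hnone, obm_none]
    · have ht' : tau n i r' = l := by rw [tau_cmul i ho', b₁.2, b₂.2]
      rw [obm_some, dif_pos ht', Acomp_single_single, one_mul, one_smul]
      unfold bm
      have heq : cmul r b₁.1 = cmul b₃.1 r' := by rw [ho, ho'] at hmain; simpa using hmain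
      rw [heq]

theorem Acomp_assoc {i j l w : ZMod n} (h : AHom n k l w) (g : AHom n k j l)
    (f : AHom n k i j) :
    Acomp n k (Acomp n k h g) f = Acomp n k h (Acomp n k g f) := by
  induction f using Finsupp.induction_linear with
  | zero => rw [Acomp_zero_right, Acomp_zero_right, Acomp_zero_right]
  | add f f' hf hf' =>
      rw [Acomp_add_right, Acomp_add_right, Acomp_add_right, hf, hf']
  | single b₁ c₁ =>
    induction g using Finsupp.induction_linear with
    | zero => rw [Acomp_zero_right, Acomp_zero_left, Acomp_zero_left, Acomp_zero_right]
    | add g g' hg hg' =>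
        rw [Acomp_add_right, Acomp_add_left, Acomp_add_left, Acomp_add_right, hg, hg']
    | single b₂ c₂ =>
      induction h using Finsupp.induction_linear with
      | zero => rw [Acomp_zero_left, Acomp_zero_left, Acomp_zero_left]
      | add h h' hh hh' =>
          rw [Acomp_add_left, Acomp_add_left, Acomp_add_left, hh, hh']
      | single b₃ c₃ =>
        have e₁ : (Finsupp.single b₁ c₁ : AHom n k i j) = c₁ • Finsupp.single b₁ 1 := by
          rw [Finsupp.smul_single, smul_eq_mul, mul_one]
        have e₃ : (Finsupp.single b₃ c₃ : AHom n k l w) = c₃ • Finsupp.single b₃ 1 := by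
          rw [Finsupp.smul_single, smul_eq_mul, mul_one]
        rw [Acomp_single_single, Acomp_single_single, Acomp_smul_left, Acomp_smul_right,
          e₁, e₃, Acomp_smul_right, Acomp_smul_left, bm_assoc b₁ b₂ b₃,
          smul_smul, smul_smul]
        congr 1
        ring


/-- The degree of the basis word with code `m` starting at vertex `i`, for the grading
of `A` determined by `deg u_{i-1,i} = p i` and `deg v_{i,i-1} = q i`.  (A word with
code `m > 0` consists of the letters `v_{i,i-1}, u_{i-1,i}, v_{i,i-1}, …` (`m` of
them), a word with code `m < 0` of the letters `u_{i,i+1}, v_{i+1,i}, …`.) -/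
def deg (p q : ZMod n → ℤ) (i : ZMod n) (m : ℤ) : ℤ :=
  if 0 < m then
    (((m.natAbs + 1) / 2 : ℕ) : ℤ) * q i + ((m.natAbs / 2 : ℕ) : ℤ) * p i
  else
    (((m.natAbs + 1) / 2 : ℕ) : ℤ) * p (i + 1) + ((m.natAbs / 2 : ℕ) : ℤ) * q (i + 1)

private lemma lin1 {a b c d e f : ℤ} (Q P : ℤ) (h1 : a = c + e) (h2 : b = d + f) :
    a * Q + b * P = c * Q + d * P + (e * Q + f * P) := by subst h1; subst h2; ring

private lemma lin2 {a b c d e f : ℤ} (Q P : ℤ) (h1 : a = c + f) (h2 : b = d + e) :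
    a * Q + b * P = c * Q + d * P + (e * P + f * Q) := by subst h1; subst h2; ring

set_option maxHeartbeats 1000000 in
/-- Additivity of degrees under composition of basis words. -/
lemma deg_cmul (p q : ZMod n → ℤ) {m₂ m₁ r : ℤ} (i : ZMod n)
    (h : cmul m₂ m₁ = some r) :
    deg p q i r = deg p q i m₁ + deg p q (tau n i m₁) m₂ := by
  unfold cmul at h
  by_cases h1 : m₁ = 0
  · rw [if_pos h1] at h
    obtain rfl : m₂ = r := by injection h
    subst h1
    simp [deg, tau]
  rw [if_neg h1] at h
  by_cases h2 : m₂ = 0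
  · rw [if_pos h2] at h
    obtain rfl : m₁ = r := by injection h
    subst h2
    simp [deg, tau]
  rw [if_neg h2] at h
  by_cases h3 : (0 < m₂) ↔ ¬ leftv m₁
  · rw [if_pos h3] at h
    obtain rfl : (if 0 < m₁ then m₁ + (m₂.natAbs : ℤ) else m₁ - (m₂.natAbs : ℤ)) = r := by
      injection h
    unfold leftv at h3
    unfold deg tau
    split_ifs <;>
      (try simp only [sub_add_cancel]) <;>
      (first
        | rfl
        | (exfalso; omega)
        | exact lin1 _ _ (by omega) (by omega)
        | exact lin2 _ _ (by omega) (by omega))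
  · rw [if_neg h3] at h; exact absurd h (by simp)


/-- For any "degree" function `σ` on the index set of a free module, the submodules
spanned by the basis elements of each fixed degree form an internal direct sum
decomposition. -/
lemma isInternal_supported {α Γ : Type} [DecidableEq Γ] (σ : α → Γ) :
    DirectSum.IsInternal
      (fun γ : Γ => Finsupp.supported k k {b : α | σ b = γ}) := by
  rw [DirectSum.isInternal_submodule_iff_iSupIndep_and_iSup_eq_top]
  constructor
  · intro γ
    have hle : (⨆ (γ') (_ : γ' ≠ γ), Finsupp.supported k k {b : α | σ b = γ'})
        ≤ Finsupp.supported k k {b : α | σ b ≠ γ} := by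
      refine iSup_le fun γ' => iSup_le fun hγ' => Finsupp.supported_mono ?_
      intro b hb
      simp only [Set.mem_setOf_eq] at hb ⊢
      rw [hb]; exact hγ'
    exact (Finsupp.disjoint_supported_supported
      (by simp [Set.disjoint_left])).mono_right hle
  · rw [eq_top_iff]
    intro x _
    rw [← Finsupp.sum_single x]
    refine Submodule.finsuppSum_mem _ _ _ _ fun b hb => ?_
    exact Submodule.mem_iSup_of_mem (σ b)
      (Finsupp.single_mem_supported k _ rfl)

variable (n k) in
/-- The graded pieces of the hom spaces of the graded category `A_{(p,q)}`. -/
def grA (p q : ZMod n → ℤ) (i j : ZMod n) (δ : ℤ) : Submodule k (AHom n k i j) :=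
  Finsupp.supported k k {b : {c : ℤ // tau n i c = j} | deg p q i b.1 = δ}

lemma grA_internal (p q : ZMod n → ℤ) (i j : ZMod n) :
    DirectSum.IsInternal (grA n k p q i j) :=
  isInternal_supported (α := {c : ℤ // tau n i c = j}) (Γ := ℤ)
    (fun b => deg p q i b.1)

lemma Aid_mem_grA (p q : ZMod n → ℤ) (i : ZMod n) :
    Aid n k i ∈ grA n k p q i i 0 := by
  apply Finsupp.single_mem_supported
  show deg p q i 0 = 0
  norm_num [deg]

lemma Acomp_mem_grA (p q : ZMod n → ℤ) {i j l : ZMod n} (δ₁ δ₂ : ℤ)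
    (g : AHom n k j l) (f : AHom n k i j)
    (hg : g ∈ grA n k p q j l δ₂) (hf : f ∈ grA n k p q i j δ₁) :
    Acomp n k g f ∈ grA n k p q i l (δ₁ + δ₂) := by
  unfold Acomp
  refine Submodule.finsuppSum_mem _ _ _ _ fun m₁ hm₁ => ?_
  refine Submodule.finsuppSum_mem _ _ _ _ fun m₂ hm₂ => ?_
  refine Submodule.smul_mem _ _ ?_
  have hd₁ : deg p q i m₁.1 = δ₁ :=
    (Finsupp.mem_supported k f).mp hf (Finsupp.mem_support_iff.mpr hm₁)
  have hd₂ : deg p q j m₂.1 = δ₂ :=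
    (Finsupp.mem_supported k g).mp hg (Finsupp.mem_support_iff.mpr hm₂)
  rcases hbm : cmul m₂.1 m₁.1 with _ | r
  · rw [bm, hbm, obm_none]; exact zero_mem _
  · rw [bm, hbm, obm_some]
    split_ifs with ht
    · apply Finsupp.single_mem_supported
      show deg p q i r = δ₁ + δ₂
      rw [deg_cmul p q i hbm, m₁.2, hd₁, hd₂]
    · exact zero_mem _

variable (n k) in
/-- The generator `u_{i,i+1} : X_i → X_{i+1}` (the word consisting of one letter `u`,
with code `-1`). -/
def uElem (i : ZMod n) : AHom n k i (i + 1) :=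
  Finsupp.single ⟨-1, by norm_num [tau]⟩ 1

variable (n k) in
/-- The generator `v_{i,i-1} : X_i → X_{i-1}` (the word consisting of one letter `v`,
with code `1`). -/
def vElem (i : ZMod n) : AHom n k i (i - 1) :=
  Finsupp.single ⟨1, by norm_num [tau]⟩ 1

end ACat

end ACat

noncomputable section Stmt12

open ACat MvPolynomial

attribute [local instance] Classical.propDecidable

/-- The polynomial ring `R = ℂ[z₁,z₂,z₃]` (variables indexed by `ZMod 3`). -/
abbrev R3 : Type := MvPolynomial (ZMod 3) ℂ

/-- The superpotential `W = z₁z₂z₃`. -/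
def W3 : R3 := X 0 * X 1 * X 2

variable (D : ℕ) (d : ZMod 3 → ℤ)

/-- The weights of the `(1/D)ℤ`-grading of `R`: `deg zᵢ = 2dᵢ/D`. -/
def wt : ZMod 3 → ℚ := fun i => 2 * (d i : ℚ) / (D : ℚ)

/-- The graded pieces of `R`. -/
def Rgr (γ : ℚ) : Submodule ℂ R3 :=
  weightedHomogeneousSubmodule ℂ (wt D d) γ

/-- A `(1/D)ℤ`-graded matrix factorization of `W = z₁z₂z₃`: a pair of finitely
generated free `(1/D)ℤ`-graded `R`-modules (encoded by their ranks and the degree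
shifts `σ` of their basis vectors) together with homogeneous maps `t₁`, `t₀` of
degree `1` whose composites (both ways) are multiplication by `W`. -/
structure MFQ where
  N₁ : ℕ
  N₀ : ℕ
  σ₁ : Fin N₁ → ℚ
  σ₀ : Fin N₀ → ℚ
  t₁ : (Fin N₁ → R3) →ₗ[R3] (Fin N₀ → R3)
  t₀ : (Fin N₀ → R3) →ₗ[R3] (Fin N₁ → R3)
  t₁_mem : ∀ (γ : ℚ) (v : Fin N₁ → R3), (∀ b, v b ∈ Rgr D d (γ - σ₁ b)) →
    ∀ b, t₁ v b ∈ Rgr D d (γ + 1 - σ₀ b)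
  t₀_mem : ∀ (γ : ℚ) (v : Fin N₀ → R3), (∀ b, v b ∈ Rgr D d (γ - σ₀ b)) →
    ∀ b, t₀ v b ∈ Rgr D d (γ + 1 - σ₁ b)
  factor₁ : ∀ v, t₁ (t₀ v) = W3 • v
  factor₀ : ∀ v, t₀ (t₁ v) = W3 • v

/-- Multiplication by a ring element, as an endomorphism of a free module. -/
def mulMap {n m : ℕ} (h : n = m) (a : R3) : (Fin n → R3) →ₗ[R3] (Fin m → R3) :=
  a • (LinearMap.funLeft R3 R3 (Fin.cast h.symm))

lemma dtriple (hsum : d 0 + d 1 + d 2 = (D : ℤ)) :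
    ∀ i : ZMod 3, d i + d (i + 1) + d (i + 2) = (D : ℤ) := by
  intro i
  fin_cases i
  · show d 0 + d (0 + 1) + d (0 + 2) = (D : ℤ)
    have e1 : (0 + 1 : ZMod 3) = 1 := by decide
    have e2 : (0 + 2 : ZMod 3) = 2 := by decide
    rw [e1, e2]; exact hsum
  · show d 1 + d (1 + 1) + d (1 + 2) = (D : ℤ)
    have e1 : (1 + 1 : ZMod 3) = 2 := by decide
    have e2 : (1 + 2 : ZMod 3) = 0 := by decide
    rw [e1, e2]; linarith [hsum]
  · show d 2 + d (2 + 1) + d (2 + 2) = (D : ℤ)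
    have e1 : (2 + 1 : ZMod 3) = 0 := by decide
    have e2 : (2 + 2 : ZMod 3) = 1 := by decide
    rw [e1, e2]; linarith [hsum]

/-- The matrix factorization
`T_i = (R --(z_{i+1} z_{i+2})--> R[1 - 2d̃ᵢ] --(z_i)--> R)` of `W`. -/
def TT (hD : 1 ≤ D) (hsum : d 0 + d 1 + d 2 = (D : ℤ)) (i : ZMod 3) : MFQ D d where
  N₁ := 1
  N₀ := 1
  σ₁ := fun _ => 0
  σ₀ := fun _ => 2 * (d i : ℚ) / (D : ℚ) - 1
  t₁ := mulMap rfl (X (i + 1) * X (i + 2))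
  t₀ := mulMap rfl (X i)
  t₁_mem := by
    intro γ v hv b
    have h1 : IsWeightedHomogeneous (wt D d) (X (i+1) * X (i+2) : R3)
        (wt D d (i+1) + wt D d (i+2)) :=
      (isWeightedHomogeneous_X ℂ _ (i+1)).mul (isWeightedHomogeneous_X ℂ _ (i+2))
    have h2 : IsWeightedHomogeneous (wt D d) (v b) (γ - 0) :=
      (mem_weightedHomogeneousSubmodule _ _ _ _).mp (hv b)
    have h3 := h1.mul h2
    have heq : wt D d (i+1) + wt D d (i+2) + (γ - 0)
        = γ + 1 - (2 * (d i : ℚ) / (D : ℚ) - 1) := by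
      have hs := dtriple D d hsum i
      have hz : d (i + 1) + d (i + 2) = (D : ℤ) - d i := by linarith [hs]
      have hq : ((d (i + 1) : ℚ)) + ((d (i + 2) : ℚ)) = (D : ℚ) - (d i : ℚ) := by
        exact_mod_cast hz
      have hD' : (D : ℚ) ≠ 0 := by
        simp only [ne_eq, Nat.cast_eq_zero]; omega
      unfold wt
      field_simp
      linear_combination (2 : ℚ) * hq
    rw [Rgr, mem_weightedHomogeneousSubmodule, ← heq]
    show IsWeightedHomogeneous (wt D d) ((X (i+1) * X (i+2) : R3) • v b) _
    simpa [smul_eq_mul] using h3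
  t₀_mem := by
    intro γ v hv b
    have h1 : IsWeightedHomogeneous (wt D d) (X i : R3) (wt D d i) :=
      isWeightedHomogeneous_X ℂ _ i
    have h2 : IsWeightedHomogeneous (wt D d) (v b)
        (γ - (2 * (d i : ℚ) / (D : ℚ) - 1)) :=
      (mem_weightedHomogeneousSubmodule _ _ _ _).mp (hv b)
    have h3 := h1.mul h2
    have heq : wt D d i + (γ - (2 * (d i : ℚ) / (D : ℚ) - 1)) = γ + 1 - 0 := by
      unfold wt; ring
    rw [Rgr, mem_weightedHomogeneousSubmodule, ← heq]
    show IsWeightedHomogeneous (wt D d) ((X i : R3) • v b) _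
    simpa [smul_eq_mul] using h3
  factor₁ := by
    intro v
    funext b
    show (X (i+1) * X (i+2) : R3) • ((X i : R3) • v _) = W3 • v b
    have hw : (X (i+1) * X (i+2) : R3) * X i = W3 := by
      fin_cases i
      · show (X (0+1) * X (0+2) : R3) * X 0 = W3
        have e1 : (0 + 1 : ZMod 3) = 1 := by decide
        have e2 : (0 + 2 : ZMod 3) = 2 := by decide
        rw [e1, e2, W3]; try ring
      · show (X (1+1) * X (1+2) : R3) * X 1 = W3
        have e1 : (1 + 1 : ZMod 3) = 2 := by decide
        have e2 : (1 + 2 : ZMod 3) = 0 := by decide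
        rw [e1, e2, W3]; try ring
      · show (X (2+1) * X (2+2) : R3) * X 2 = W3
        have e1 : (2 + 1 : ZMod 3) = 0 := by decide
        have e2 : (2 + 2 : ZMod 3) = 1 := by decide
        rw [e1, e2, W3]; try ring
    rw [smul_smul, hw]
    rfl
  factor₀ := by
    intro v
    funext b
    show (X i : R3) • ((X (i+1) * X (i+2) : R3) • v _) = W3 • v b
    have hw : (X i : R3) * (X (i+1) * X (i+2)) = W3 := by
      fin_cases i
      · show (X 0 : R3) * (X (0+1) * X (0+2)) = W3
        have e1 : (0 + 1 : ZMod 3) = 1 := by decide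
        have e2 : (0 + 2 : ZMod 3) = 2 := by decide
        rw [e1, e2, W3]; try ring
      · show (X 1 : R3) * (X (1+1) * X (1+2)) = W3
        have e1 : (1 + 1 : ZMod 3) = 2 := by decide
        have e2 : (1 + 2 : ZMod 3) = 0 := by decide
        rw [e1, e2, W3]; try ring
      · show (X 2 : R3) * (X (2+1) * X (2+2)) = W3
        have e1 : (2 + 1 : ZMod 3) = 0 := by decide
        have e2 : (2 + 2 : ZMod 3) = 1 := by decide
        rw [e1, e2, W3]; try ring
    rw [smul_smul, hw]
    rfl

variable {D d}

/-- The even part of the morphism space of matrix factorizations. -/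
abbrev EMaps (T S : MFQ D d) : Type :=
  ((Fin T.N₁ → R3) →ₗ[R3] (Fin S.N₁ → R3)) × ((Fin T.N₀ → R3) →ₗ[R3] (Fin S.N₀ → R3))

/-- The odd part of the morphism space of matrix factorizations. -/
abbrev OMaps (T S : MFQ D d) : Type :=
  ((Fin T.N₁ → R3) →ₗ[R3] (Fin S.N₀ → R3)) × ((Fin T.N₀ → R3) →ₗ[R3] (Fin S.N₁ → R3))

/-- The full morphism space (even part, odd part). -/
abbrev MMaps (T S : MFQ D d) : Type := EMaps T S × OMaps T S

/-- The differential on even morphisms (`d f = s ∘ f - f ∘ t`). -/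
def dE {T S : MFQ D d} (f : EMaps T S) : OMaps T S :=
  (S.t₁ ∘ₗ f.1 - f.2 ∘ₗ T.t₁, S.t₀ ∘ₗ f.2 - f.1 ∘ₗ T.t₀)

/-- The differential on odd morphisms (`d g = s ∘ g + g ∘ t`). -/
def dO {T S : MFQ D d} (g : OMaps T S) : EMaps T S :=
  (S.t₀ ∘ₗ g.1 + g.2 ∘ₗ T.t₁, S.t₁ ∘ₗ g.2 + g.1 ∘ₗ T.t₀)

/-- Closedness of a morphism (even and odd parts separately). -/
def IsCycle {T S : MFQ D d} (m : MMaps T S) : Prop := dE m.1 = 0 ∧ dO m.2 = 0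

/-- Exactness of a morphism: it is a boundary in the 2-periodic Hom complex. -/
def IsCob {T S : MFQ D d} (m : MMaps T S) : Prop :=
  (∃ g : OMaps T S, dO g = m.1) ∧ (∃ f : EMaps T S, dE f = m.2)

/-- Composition in the (cohomology of the) DG category of matrix factorizations. -/
def mcomp {P S U : MFQ D d} (f : MMaps S U) (g : MMaps P S) : MMaps P U :=
  ((f.1.1 ∘ₗ g.1.1 + f.2.2 ∘ₗ g.2.1, f.1.2 ∘ₗ g.1.2 + f.2.1 ∘ₗ g.2.2),
   (f.1.2 ∘ₗ g.2.1 + f.2.1 ∘ₗ g.1.1, f.1.1 ∘ₗ g.2.2 + f.2.2 ∘ₗ g.1.2))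

/-- The identity morphism (an even cycle). -/
def idMS (T : MFQ D d) : MMaps T T := ((LinearMap.id, LinearMap.id), 0)

/-- Homogeneity of degree `γ` for a map between graded free modules with shift
vectors `σ`, `τ`. -/
def IsHomogMap {n m : ℕ} (σ : Fin n → ℚ) (τ : Fin m → ℚ) (γ : ℚ)
    (f : (Fin n → R3) →ₗ[R3] (Fin m → R3)) : Prop :=
  ∀ (γ' : ℚ) (v : Fin n → R3), (∀ b, v b ∈ Rgr D d (γ' - σ b)) →
    ∀ b, f v b ∈ Rgr D d (γ' + γ - τ b)

variable (D d)

/-- The odd closed morphism `ũ_{i,i+1} : T_i → T_{i+1}`, with components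
multiplication by `z_{i+2}` and by `-1`. -/
def uMF (hD : 1 ≤ D) (hsum : d 0 + d 1 + d 2 = (D : ℤ)) (i : ZMod 3) :
    OMaps (TT D d hD hsum i) (TT D d hD hsum (i + 1)) :=
  (mulMap rfl (X (i + 2)), mulMap rfl (-1))

/-- The odd closed morphism `ṽ_{i,i-1} : T_i → T_{i-1}`, with components
multiplication by `z_{i+1}` and by `-1`. -/
def vMF (hD : 1 ≤ D) (hsum : d 0 + d 1 + d 2 = (D : ℤ)) (i : ZMod 3) :
    OMaps (TT D d hD hsum i) (TT D d hD hsum (i - 1)) :=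
  (mulMap rfl (X (i + 1)), mulMap rfl (-1))

/-- The parity of a basis word of `A`. -/
def par (m : ℤ) : ZMod 2 := ((m : ℤ) : ZMod 2)

/-- The joint (`(1/D)ℤ`-degree, parity) grading of the hom spaces of `A_{(p̃,q̃)}`. -/
def grQ (p q : ZMod 3 → ℤ) (i j : ZMod 3) (γ : ℚ × ZMod 2) :
    Submodule ℂ (AHom 3 ℂ i j) :=
  Finsupp.supported ℂ ℂ
    {b : {c : ℤ // tau 3 i c = j} | ((deg p q i b.1 : ℚ) / (D : ℚ), par b.1) = γ}



/-!
A morphism `T_i → T_j` is a quadruple of polynomials (the four `1 × 1` matrix entries), and `Φ`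
sends a word of `A` with `n` letters to the `n`-th power of one odd generator `(z_t, -1)`, so that
`x_i ↦ -z_{i+1}` and `y_i ↦ -z_{i+2}`. Composable words therefore compose on the nose.

The cohomology of `Hom(T_i, T_j)` is read off a single polynomial: a cycle is exact iff the sum
of its `T₁ → T₁` and `T₀ → T₁` entries lies in the monomial ideal `(z_i, z_j, z_{i+1} z_{i+2})`.
One direction is the shape of a coboundary; for the other, the cycle equations and the primality
of the variables force the entries into the required form. The monomials outside this ideal are
exactly the pure powers of the variable(s) that label the words from `X_i` to `X_j`, one per word,
which gives injectivity and surjectivity on cohomology; a non-composable pair of words involves two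
different variables and lands in the ideal. The degrees match because `d_i + d_{i+1} + d_{i+2} = D`.
-/

variable {D d}

section ZMod3

lemma zmod3_cases (i j : ZMod 3) : j = i ∨ j = i + 1 ∨ j = i + 2 := by
  revert i j; decide

lemma zmod3_ne (i : ZMod 3) : i ≠ i + 1 ∧ i ≠ i + 2 ∧ i + 1 ≠ i + 2 := by
  revert i; decide

lemma zmod3_add_one_add_two (i : ZMod 3) : i + 1 + 2 = i := by
  revert i; decide

lemma zmod3_exists_ne {i j : ZMod 3} (h : j ≠ i) : ∃ k, i ≠ k ∧ j ≠ k := by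
  revert i j; decide

lemma zmod3_eq_of_ne {a b x y : ZMod 3} (hab : a ≠ b) (hxa : x ≠ a) (hxb : x ≠ b) (hya : y ≠ a)
    (hyb : y ≠ b) : x = y := by
  have key : ∀ a b x y : ZMod 3, a = b ∨ x = a ∨ x = b ∨ y = a ∨ y = b ∨ x = y := by decide
  rcases key a b x y with h | h | h | h | h | h <;> first | exact h | contradiction

lemma zmod3_eq_or_eq_of_ne {i j k : ZMod 3} (hij : i ≠ j) (hik : i ≠ k) (hjk : j ≠ k) :
    (j = i + 1 ∧ k = i + 2) ∨ (j = i + 2 ∧ k = i + 1) := by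
  revert i j k; decide

end ZMod3

lemma MvPolynomial.X_dvd_of_dvd_X_mul {σ R : Type*} [CommRing R] [IsDomain R] {s t : σ}
    (hst : s ≠ t) {p : MvPolynomial σ R} (h : X s ∣ X t * p) : X s ∣ p :=
  (X_dvd_mul_iff.1 h).resolve_left (by rwa [X_dvd_X])

section MulMap

variable {n m k : ℕ}

@[simp] lemma mulMap_apply (h : n = m) (a : R3) (v : Fin n → R3) (b : Fin m) :
    mulMap h a v b = a * v (Fin.cast h.symm b) := rfl

lemma mulMap_comp (h : n = m) (h' : m = k) (a b : R3) :
    mulMap h' a ∘ₗ mulMap h b = mulMap (h.trans h') (a * b) :=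
  LinearMap.ext fun _ => funext fun _ => by simp [mul_assoc]

lemma mulMap_add (h : n = m) (a b : R3) : mulMap h (a + b) = mulMap h a + mulMap h b :=
  LinearMap.ext fun _ => funext fun _ => by simp [add_mul]

lemma mulMap_sub (h : n = m) (a b : R3) : mulMap h (a - b) = mulMap h a - mulMap h b :=
  LinearMap.ext fun _ => funext fun _ => by simp [sub_mul]

@[simp] lemma mulMap_zero (h : n = m) : mulMap h 0 = 0 :=
  LinearMap.ext fun _ => funext fun _ => by simp

@[simp] lemma mulMap_one (h : n = n) : mulMap h 1 = LinearMap.id :=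
  LinearMap.ext fun _ => funext fun _ => by simp

lemma mulMap_inj (h : n = m) (hm : 0 < m) {a b : R3} : mulMap h a = mulMap h b ↔ a = b :=
  ⟨fun hab => by simpa using congr_fun (LinearMap.congr_fun hab 1) ⟨0, hm⟩, congrArg _⟩

lemma exists_eq_mulMap (hn : n = 1) (hm : m = 1) (F : (Fin n → R3) →ₗ[R3] (Fin m → R3)) :
    ∃ a, F = mulMap (hn.trans hm.symm) a := by
  subst hn hm
  refine ⟨F 1 0, LinearMap.ext fun v => funext fun b => ?_⟩
  have hv : v = v 0 • (1 : Fin 1 → R3) := by ext c; simp [Subsingleton.elim c 0]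
  rw [Subsingleton.elim b 0, mulMap_apply, hv, map_smul]
  simp [mul_comm]

end MulMap

section Complex

variable {T S U : MFQ D d}

def dEₗ (T S : MFQ D d) : EMaps T S →ₗ[R3] OMaps T S where
  toFun := dE
  map_add' f g := by
    refine Prod.ext ?_ ?_ <;>
      simp only [dE, Prod.fst_add, Prod.snd_add, LinearMap.add_comp, LinearMap.comp_add] <;> abel
  map_smul' r f := by
    refine Prod.ext ?_ ?_ <;>
      simp only [dE, Prod.smul_fst, Prod.smul_snd, LinearMap.smul_comp, LinearMap.comp_smul,
        smul_sub, RingHom.id_apply]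

def dOₗ (T S : MFQ D d) : OMaps T S →ₗ[R3] EMaps T S where
  toFun := dO
  map_add' f g := by
    refine Prod.ext ?_ ?_ <;>
      simp only [dO, Prod.fst_add, Prod.snd_add, LinearMap.add_comp, LinearMap.comp_add] <;> abel
  map_smul' r f := by
    refine Prod.ext ?_ ?_ <;>
      simp only [dO, Prod.smul_fst, Prod.smul_snd, LinearMap.smul_comp, LinearMap.comp_smul,
        smul_add, RingHom.id_apply]

/-- `z ∈ cycles T S` is `IsCycle z` by definition. -/
def cycles (T S : MFQ D d) : Submodule R3 (MMaps T S) :=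
  (LinearMap.ker (dEₗ T S)).prod (LinearMap.ker (dOₗ T S))

/-- `z ∈ coboundaries T S` is `IsCob z` by definition. -/
def coboundaries (T S : MFQ D d) : Submodule R3 (MMaps T S) :=
  (LinearMap.range (dOₗ T S)).prod (LinearMap.range (dEₗ T S))

lemma isCycle_iff_forall {z : MMaps T S} :
    IsCycle z ↔ (∀ v, S.t₁ (z.1.1 v) = z.1.2 (T.t₁ v)) ∧ (∀ v, S.t₀ (z.1.2 v) = z.1.1 (T.t₀ v)) ∧
      (∀ v, S.t₀ (z.2.1 v) = -z.2.2 (T.t₁ v)) ∧ (∀ v, S.t₁ (z.2.2 v) = -z.2.1 (T.t₀ v)) := by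
  simp only [IsCycle, dE, dO, Prod.ext_iff, LinearMap.ext_iff, LinearMap.comp_apply,
    LinearMap.neg_apply, Prod.fst_zero, Prod.snd_zero, sub_eq_zero, add_eq_zero_iff_eq_neg,
    and_assoc]

lemma IsCycle.mcomp {f : MMaps S U} {g : MMaps T S} (hf : IsCycle f) (hg : IsCycle g) :
    IsCycle (mcomp f g) := by
  obtain ⟨hf₁, hf₂, hf₃, hf₄⟩ := isCycle_iff_forall.1 hf
  obtain ⟨hg₁, hg₂, hg₃, hg₄⟩ := isCycle_iff_forall.1 hg
  refine isCycle_iff_forall.2 ⟨fun v => ?_, fun v => ?_, fun v => ?_, fun v => ?_⟩ <;>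
    simp only [_root_.mcomp, LinearMap.add_apply, LinearMap.comp_apply, map_add, map_neg, hf₁, hf₂,
      hf₃, hf₄, hg₁, hg₂, hg₃, hg₄, neg_neg, neg_add]

lemma mcomp_add_left (f g : MMaps S U) (q : MMaps T S) :
    mcomp (f + g) q = mcomp f q + mcomp g q := by
  refine Prod.ext (Prod.ext ?_ ?_) (Prod.ext ?_ ?_) <;>
    simp only [mcomp, Prod.fst_add, Prod.snd_add, LinearMap.add_comp] <;> abel

lemma mcomp_add_right (f : MMaps S U) (q q' : MMaps T S) :
    mcomp f (q + q') = mcomp f q + mcomp f q' := by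
  refine Prod.ext (Prod.ext ?_ ?_) (Prod.ext ?_ ?_) <;>
    simp only [mcomp, Prod.fst_add, Prod.snd_add, LinearMap.comp_add] <;> abel

lemma mcomp_smul_left (r : R3) (f : MMaps S U) (q : MMaps T S) :
    mcomp (r • f) q = r • mcomp f q := by
  refine Prod.ext (Prod.ext ?_ ?_) (Prod.ext ?_ ?_) <;>
    simp only [mcomp, Prod.smul_fst, Prod.smul_snd, LinearMap.smul_comp, smul_add]

lemma mcomp_smul_right (r : R3) (f : MMaps S U) (q : MMaps T S) :
    mcomp f (r • q) = r • mcomp f q := by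
  refine Prod.ext (Prod.ext ?_ ?_) (Prod.ext ?_ ?_) <;>
    simp only [mcomp, Prod.smul_fst, Prod.smul_snd, LinearMap.comp_smul, smul_add]

lemma mcomp_zero_left (q : MMaps T S) : mcomp (0 : MMaps S U) q = 0 := by
  simpa using mcomp_smul_left 0 0 q

lemma mcomp_zero_right (f : MMaps S U) : mcomp f (0 : MMaps T S) = 0 := by
  simpa using mcomp_smul_right 0 f 0

end Complex

section Homogeneous

lemma negX_pow_mem_Rgr (t : ZMod 3) (a : ℕ) : (-X t : R3) ^ a ∈ Rgr D d (a * wt D d t) := by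
  rw [Rgr, mem_weightedHomogeneousSubmodule, ← nsmul_eq_mul]
  exact (isWeightedHomogeneous_X ℂ _ t).neg.pow a

variable (D d) in
def homogMaps {n m : ℕ} (σ : Fin n → ℚ) (τ : Fin m → ℚ) (γ : ℚ) :
    Submodule ℂ ((Fin n → R3) →ₗ[R3] (Fin m → R3)) where
  carrier := {f | IsHomogMap (D := D) (d := d) σ τ γ f}
  add_mem' hf hg γ' v hv b := Submodule.add_mem _ (hf γ' v hv b) (hg γ' v hv b)
  zero_mem' _ _ _ _ := Submodule.zero_mem _
  smul_mem' c _ hf γ' v hv b := Submodule.smul_mem _ c (hf γ' v hv b)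

lemma mulMap_mem_homogMaps {n m : ℕ} (h : n = m) {s t γ : ℚ} {c : R3}
    (hc : c ∈ Rgr D d (γ + s - t)) :
    mulMap h c ∈ homogMaps D d (fun _ : Fin n => s) (fun _ : Fin m => t) γ := by
  intro γ' v hv b
  have := (mem_weightedHomogeneousSubmodule _ _ _ _).1 hc |>.mul
    ((mem_weightedHomogeneousSubmodule _ _ _ _).1 (hv (Fin.cast h.symm b)))
  rw [mulMap_apply, Rgr, mem_weightedHomogeneousSubmodule]
  convert this using 1
  ring

variable (D d) in
def evenHomog (T S : MFQ D d) (γ : ℚ) : Submodule ℂ (MMaps T S) :=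
  ((homogMaps D d T.σ₁ S.σ₁ γ).prod (homogMaps D d T.σ₀ S.σ₀ γ)).prod ⊥

variable (D d) in
def oddHomog (T S : MFQ D d) (γ : ℚ) : Submodule ℂ (MMaps T S) :=
  (⊥ : Submodule ℂ (EMaps T S)).prod ((homogMaps D d T.σ₁ S.σ₀ γ).prod (homogMaps D d T.σ₀ S.σ₁ γ))

end Homogeneous

section MatrixFactorizations

variable {hD : 1 ≤ D} {hsum : d 0 + d 1 + d 2 = (D : ℤ)}

local notation "𝕋" => TT D d hD hsum

section Objects

def Xcompl (i : ZMod 3) : R3 := X (i + 1) * X (i + 2)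

lemma Xcompl_of_ne {i j k : ZMod 3} (hij : i ≠ j) (hik : i ≠ k) (hjk : j ≠ k) :
    Xcompl i = X j * X k := by
  rcases zmod3_eq_or_eq_of_ne hij hik hjk with ⟨rfl, rfl⟩ | ⟨rfl, rfl⟩
  · rfl
  · exact mul_comm _ _

/- Rank equalities are handed to `mulMap` as these named lemmas rather than as `rfl`, so that the
resulting terms stay type-correct under reducible unfolding and `simp` can use `mulMap_comp`. -/
variable (hD hsum) in
lemma TT_N₁ (i : ZMod 3) : (𝕋 i).N₁ = 1 := rfl

variable (hD hsum) in
lemma TT_N₀ (i : ZMod 3) : (𝕋 i).N₀ = 1 := rfl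

variable (hD hsum) in
def homOf (i j : ZMod 3) (e₁ e₀ o₁ o₀ : R3) : MMaps (𝕋 i) (𝕋 j) :=
  ((mulMap ((TT_N₁ hD hsum i).trans (TT_N₁ hD hsum j).symm) e₁,
    mulMap ((TT_N₀ hD hsum i).trans (TT_N₀ hD hsum j).symm) e₀),
   (mulMap ((TT_N₁ hD hsum i).trans (TT_N₀ hD hsum j).symm) o₁,
    mulMap ((TT_N₀ hD hsum i).trans (TT_N₁ hD hsum j).symm) o₀))

lemma TT_t₁ (i : ZMod 3) :
    (𝕋 i).t₁ = mulMap ((TT_N₁ hD hsum i).trans (TT_N₀ hD hsum i).symm) (Xcompl i) := rfl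

lemma TT_t₀ (i : ZMod 3) :
    (𝕋 i).t₀ = mulMap ((TT_N₀ hD hsum i).trans (TT_N₁ hD hsum i).symm) (X i) := rfl

lemma TT_σ₁ (i : ZMod 3) : (𝕋 i).σ₁ = fun _ => 0 := rfl

lemma TT_σ₀ (i : ZMod 3) : (𝕋 i).σ₀ = fun _ => wt D d i - 1 := rfl

lemma exists_eq_homOf {i j : ZMod 3} (z : MMaps (𝕋 i) (𝕋 j)) :
    ∃ e₁ e₀ o₁ o₀, z = homOf hD hsum i j e₁ e₀ o₁ o₀ := by
  obtain ⟨e₁, he₁⟩ := exists_eq_mulMap (TT_N₁ hD hsum i) (TT_N₁ hD hsum j) z.1.1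
  obtain ⟨e₀, he₀⟩ := exists_eq_mulMap (TT_N₀ hD hsum i) (TT_N₀ hD hsum j) z.1.2
  obtain ⟨o₁, ho₁⟩ := exists_eq_mulMap (TT_N₁ hD hsum i) (TT_N₀ hD hsum j) z.2.1
  obtain ⟨o₀, ho₀⟩ := exists_eq_mulMap (TT_N₀ hD hsum i) (TT_N₁ hD hsum j) z.2.2
  exact ⟨e₁, e₀, o₁, o₀, Prod.ext (Prod.ext he₁ he₀) (Prod.ext ho₁ ho₀)⟩

lemma homOf_zero {i j : ZMod 3} : homOf hD hsum i j 0 0 0 0 = 0 := by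
  simp [homOf]

lemma homOf_fst_inj {i j : ZMod 3} {e₁ e₀ o₁ o₀ e₁' e₀' o₁' o₀' : R3} :
    (homOf hD hsum i j e₁ e₀ o₁ o₀).1 = (homOf hD hsum i j e₁' e₀' o₁' o₀').1 ↔
      e₁ = e₁' ∧ e₀ = e₀' := by
  simp only [homOf, Prod.mk.injEq]
  exact (mulMap_inj _ Nat.one_pos).and (mulMap_inj _ Nat.one_pos)

lemma homOf_snd_inj {i j : ZMod 3} {e₁ e₀ o₁ o₀ e₁' e₀' o₁' o₀' : R3} :
    (homOf hD hsum i j e₁ e₀ o₁ o₀).2 = (homOf hD hsum i j e₁' e₀' o₁' o₀').2 ↔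
      o₁ = o₁' ∧ o₀ = o₀' := by
  simp only [homOf, Prod.mk.injEq]
  exact (mulMap_inj _ Nat.one_pos).and (mulMap_inj _ Nat.one_pos)

lemma homOf_fst_eq_zero {i j : ZMod 3} {e₁ e₀ o₁ o₀ : R3} :
    (homOf hD hsum i j e₁ e₀ o₁ o₀).1 = 0 ↔ e₁ = 0 ∧ e₀ = 0 := by
  rw [← homOf_fst_inj (o₁ := o₁) (o₀ := o₀) (o₁' := 0) (o₀' := 0), homOf_zero, Prod.fst_zero]

lemma homOf_snd_eq_zero {i j : ZMod 3} {e₁ e₀ o₁ o₀ : R3} :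
    (homOf hD hsum i j e₁ e₀ o₁ o₀).2 = 0 ↔ o₁ = 0 ∧ o₀ = 0 := by
  rw [← homOf_snd_inj (e₁ := e₁) (e₀ := e₀) (e₁' := 0) (e₀' := 0), homOf_zero, Prod.snd_zero]

lemma dE_homOf {i j : ZMod 3} (e₁ e₀ o₁ o₀ : R3) :
    dE (homOf hD hsum i j e₁ e₀ o₁ o₀).1 =
      (homOf hD hsum i j 0 0 (Xcompl j * e₁ - e₀ * Xcompl i) (X j * e₀ - e₁ * X i)).2 := by
  simp only [dE, homOf, TT_t₁, TT_t₀, mulMap_comp, mulMap_sub]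

lemma dO_homOf {i j : ZMod 3} (e₁ e₀ o₁ o₀ : R3) :
    dO (homOf hD hsum i j e₁ e₀ o₁ o₀).2 =
      (homOf hD hsum i j (X j * o₁ + o₀ * Xcompl i) (Xcompl j * o₀ + o₁ * X i) 0 0).1 := by
  simp only [dO, homOf, TT_t₁, TT_t₀, mulMap_comp, mulMap_add]

lemma isCycle_homOf_iff {i j : ZMod 3} {e₁ e₀ o₁ o₀ : R3} :
    IsCycle (homOf hD hsum i j e₁ e₀ o₁ o₀) ↔
      Xcompl j * e₁ = e₀ * Xcompl i ∧ X j * e₀ = e₁ * X i ∧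
      X j * o₁ + o₀ * Xcompl i = 0 ∧ Xcompl j * o₀ + o₁ * X i = 0 := by
  rw [IsCycle, dE_homOf, dO_homOf, homOf_snd_eq_zero, homOf_fst_eq_zero, sub_eq_zero,
    sub_eq_zero, and_assoc]

lemma isCob_homOf_iff {i j : ZMod 3} {e₁ e₀ o₁ o₀ : R3} :
    IsCob (homOf hD hsum i j e₁ e₀ o₁ o₀) ↔
      (∃ g₁ g₀, e₁ = X j * g₁ + g₀ * Xcompl i ∧ e₀ = Xcompl j * g₀ + g₁ * X i) ∧
      (∃ f₁ f₀, o₁ = Xcompl j * f₁ - f₀ * Xcompl i ∧ o₀ = X j * f₀ - f₁ * X i) := by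
  have hO : ∀ g : OMaps (𝕋 i) (𝕋 j), ∃ g₁ g₀, g = (homOf hD hsum i j 0 0 g₁ g₀).2 := fun g => by
    obtain ⟨_, _, g₁, g₀, h⟩ := exists_eq_homOf (((0, g) : MMaps (𝕋 i) (𝕋 j)))
    exact ⟨g₁, g₀, congrArg Prod.snd h⟩
  have hE : ∀ f : EMaps (𝕋 i) (𝕋 j), ∃ f₁ f₀, f = (homOf hD hsum i j f₁ f₀ 0 0).1 := fun f => by
    obtain ⟨f₁, f₀, _, _, h⟩ := exists_eq_homOf (((f, 0) : MMaps (𝕋 i) (𝕋 j)))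
    exact ⟨f₁, f₀, congrArg Prod.fst h⟩
  simp only [IsCob]
  refine and_congr ⟨?_, ?_⟩ ⟨?_, ?_⟩
  · rintro ⟨g, hg⟩
    obtain ⟨g₁, g₀, rfl⟩ := hO g
    rw [dO_homOf, homOf_fst_inj] at hg
    exact ⟨g₁, g₀, hg.1.symm, hg.2.symm⟩
  · rintro ⟨g₁, g₀, rfl, rfl⟩
    exact ⟨_, (dO_homOf 0 0 g₁ g₀).trans (homOf_fst_inj.2 ⟨rfl, rfl⟩)⟩
  · rintro ⟨f, hf⟩
    obtain ⟨f₁, f₀, rfl⟩ := hE f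
    rw [dE_homOf, homOf_snd_inj] at hf
    exact ⟨f₁, f₀, hf.1.symm, hf.2.symm⟩
  · rintro ⟨f₁, f₀, rfl, rfl⟩
    exact ⟨_, (dE_homOf f₁ f₀ 0 0).trans (homOf_snd_inj.2 ⟨rfl, rfl⟩)⟩

lemma mcomp_homOf {i j l : ZMod 3} (e₁ e₀ o₁ o₀ e₁' e₀' o₁' o₀' : R3) :
    mcomp (homOf hD hsum j l e₁ e₀ o₁ o₀) (homOf hD hsum i j e₁' e₀' o₁' o₀') =
      homOf hD hsum i l (e₁ * e₁' + o₀ * o₁') (e₀ * e₀' + o₁ * o₀')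
        (e₀ * o₁' + o₁ * e₁') (e₁ * o₀' + o₀ * e₀') := by
  simp only [mcomp, homOf, mulMap_comp, mulMap_add]

/-- The `T₁ → T₁` entry plus the `T₀ → T₁` entry. -/
def lead {i j : ZMod 3} : MMaps (𝕋 i) (𝕋 j) →ₗ[R3] R3 where
  toFun z := z.1.1 1 ⟨0, Nat.one_pos⟩ + z.2.2 1 ⟨0, Nat.one_pos⟩
  map_add' z z' := by
    simp only [Prod.fst_add, Prod.snd_add, LinearMap.add_apply, Pi.add_apply]; ring
  map_smul' r z := by
    simp only [Prod.smul_fst, Prod.smul_snd, LinearMap.smul_apply, Pi.smul_apply, smul_eq_mul,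
      RingHom.id_apply]; ring

@[simp] lemma lead_homOf {i j : ZMod 3} (e₁ e₀ o₁ o₀ : R3) :
    lead (homOf hD hsum i j e₁ e₀ o₁ o₀) = e₁ + o₀ := by
  simp [lead, homOf]

/-- The ideal `(z_i, z_j, z_{i+1} z_{i+2})`, presented as a monomial ideal. -/
def cobIdeal (i j : ZMod 3) : Ideal R3 :=
  Ideal.span ((fun μ => monomial μ (1 : ℂ)) ''
    {Finsupp.single i 1, Finsupp.single j 1, Finsupp.single (i + 1) 1 + Finsupp.single (i + 2) 1})

lemma cobIdeal_eq (i j : ZMod 3) : cobIdeal i j = Ideal.span {X i, X j, Xcompl i} := by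
  simp only [cobIdeal, Set.image_insert_eq, Set.image_singleton, Xcompl, X, monomial_mul, one_mul]

lemma mem_cobIdeal_iff {i j : ZMod 3} {p : R3} :
    p ∈ cobIdeal i j ↔ ∃ a b c, p = X i * a + X j * b + Xcompl i * c := by
  simp only [cobIdeal_eq, Ideal.mem_span_insert, Ideal.mem_span_singleton']
  constructor
  · rintro ⟨a, _, ⟨b, _, ⟨c, rfl⟩, rfl⟩, rfl⟩
    exact ⟨a, b, c, by ring⟩
  · rintro ⟨a, b, c, rfl⟩
    exact ⟨a, _, ⟨b, _, ⟨c, rfl⟩, rfl⟩, by ring⟩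

lemma X_mul_X_mem_cobIdeal {s t : ZMod 3} (hst : s ≠ t) (i j : ZMod 3) :
    X s * X t ∈ cobIdeal i j := by
  rw [mem_cobIdeal_iff]
  by_cases hs : s = i
  · exact ⟨X t, 0, 0, by rw [hs]; ring⟩
  by_cases ht : t = i
  · exact ⟨X s, 0, 0, by rw [ht]; ring⟩
  exact ⟨0, 0, 1, by rw [Xcompl_of_ne (Ne.symm hs) (Ne.symm ht) hst]; ring⟩

lemma X_mem_cobIdeal_left (i j : ZMod 3) : X i ∈ cobIdeal i j :=
  mem_cobIdeal_iff.2 ⟨1, 0, 0, by ring⟩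

lemma X_mem_cobIdeal_right (i j : ZMod 3) : X j ∈ cobIdeal i j :=
  mem_cobIdeal_iff.2 ⟨0, 1, 0, by ring⟩

lemma lead_mem_of_isCob {i j : ZMod 3} {z : MMaps (𝕋 i) (𝕋 j)} (hz : IsCob z) :
    lead z ∈ cobIdeal i j := by
  obtain ⟨e₁, e₀, o₁, o₀, rfl⟩ := exists_eq_homOf z
  obtain ⟨⟨g₁, g₀, rfl, -⟩, ⟨f₁, f₀, -, rfl⟩⟩ := isCob_homOf_iff.1 hz
  rw [lead_homOf, mem_cobIdeal_iff]
  exact ⟨-f₁, g₁ + f₀, g₀, by ring⟩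

lemma isCob_of_lead_mem_self {i : ZMod 3} {z : MMaps (𝕋 i) (𝕋 i)} (hz : IsCycle z)
    (h : lead z ∈ cobIdeal i i) : IsCob z := by
  obtain ⟨e₁, e₀, o₁, o₀, rfl⟩ := exists_eq_homOf z
  obtain ⟨h₁, -, h₃, -⟩ := isCycle_homOf_iff.1 hz
  have he : e₀ = e₁ := mul_left_cancel₀ (mul_ne_zero (X_ne_zero _) (X_ne_zero _))
    (by rw [← Xcompl]; linear_combination -h₁)
  -- the odd part of an endomorphism cycle of `T_i` is always exact
  obtain ⟨g, rfl⟩ : X i ∣ o₀ :=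
    X_dvd_of_dvd_X_mul (zmod3_ne i).2.1 <| X_dvd_of_dvd_X_mul (zmod3_ne i).1
      ⟨-o₁, by rw [Xcompl] at h₃; linear_combination h₃⟩
  have ho₁ : o₁ = -(g * Xcompl i) := mul_left_cancel₀ (X_ne_zero i) (by linear_combination h₃)
  obtain ⟨a, b, c, hlead⟩ := mem_cobIdeal_iff.1 (lead_homOf (hD := hD) (hsum := hsum) .. ▸ h)
  subst he ho₁
  refine isCob_homOf_iff.2 ⟨⟨a + b - g, c, ?_, ?_⟩, ⟨-g, 0, ?_, ?_⟩⟩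
  · linear_combination hlead
  · linear_combination hlead
  · ring
  · ring

lemma isCob_of_lead_mem_of_ne {i j k : ZMod 3} (hij : i ≠ j) (hik : i ≠ k) (hjk : j ≠ k)
    {z : MMaps (𝕋 i) (𝕋 j)} (hz : IsCycle z) (h : lead z ∈ cobIdeal i j) : IsCob z := by
  obtain ⟨e₁, e₀, o₁, o₀, rfl⟩ := exists_eq_homOf z
  obtain ⟨h₁, -, h₃, -⟩ := isCycle_homOf_iff.1 hz
  have hXi : Xcompl i = X j * X k := Xcompl_of_ne hij hik hjk
  have hXj : Xcompl j = X i * X k := Xcompl_of_ne hij.symm hjk hik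
  rw [hXi, hXj] at h₁
  rw [hXi] at h₃
  have h₁' : X i * e₁ = X j * e₀ := mul_left_cancel₀ (X_ne_zero k) (by linear_combination h₁)
  obtain ⟨g, rfl⟩ : X j ∣ e₁ := X_dvd_of_dvd_X_mul hij.symm ⟨e₀, h₁'⟩
  have he₀ : e₀ = X i * g := mul_left_cancel₀ (X_ne_zero j) (by linear_combination -h₁')
  have ho₁ : o₁ = -(X k * o₀) := mul_left_cancel₀ (X_ne_zero j) (by linear_combination h₃)
  obtain ⟨a, b, c, hlead⟩ := mem_cobIdeal_iff.1 (lead_homOf (hD := hD) (hsum := hsum) .. ▸ h)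
  rw [hXi] at hlead
  subst he₀ ho₁
  refine isCob_homOf_iff.2 ⟨⟨g, 0, ?_, ?_⟩, ⟨-a, b + X k * c - g, ?_, ?_⟩⟩
  · ring
  · ring
  · rw [hXi, hXj]; linear_combination (-X k) * hlead
  · linear_combination hlead

theorem isCob_iff_lead_mem {i j : ZMod 3} {z : MMaps (𝕋 i) (𝕋 j)} (hz : IsCycle z) :
    IsCob z ↔ lead z ∈ cobIdeal i j := by
  refine ⟨lead_mem_of_isCob, fun h => ?_⟩
  by_cases hji : j = i
  · subst hji
    exact isCob_of_lead_mem_self hz h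
  · obtain ⟨k, hik, hjk⟩ := zmod3_exists_ne hji
    exact isCob_of_lead_mem_of_ne (Ne.symm hji) hik hjk hz h

end Objects

section Words

/-- All letters of a word starting at `X_i` act through one variable: `z_{i+1}` if the word starts
with `v_{i,i-1}` (code `m > 0`), `z_{i+2}` if it starts with `u_{i,i+1}`. -/
def wordVar (i : ZMod 3) (m : ℤ) : ZMod 3 := if 0 < m then i + 1 else i + 2

lemma tau_cases (i : ZMod 3) (m : ℤ) :
    (m % 2 = 0 ∧ tau 3 i m = i) ∨ (m % 2 ≠ 0 ∧ 0 < m ∧ tau 3 i m = i + 2) ∨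
      (m % 2 ≠ 0 ∧ ¬0 < m ∧ tau 3 i m = i + 1) := by
  unfold tau
  split_ifs <;> simp_all [sub_eq_add_neg, (by decide : (-1 : ZMod 3) = 2)]

lemma tau_of_odd_pos {i : ZMod 3} {m : ℤ} (hm : m % 2 ≠ 0) (h : 0 < m) : tau 3 i m = i + 2 := by
  rcases tau_cases i m with ⟨_, _⟩ | ⟨_, _, ht⟩ | ⟨_, _, _⟩
  · omega
  · exact ht
  · omega

lemma tau_of_odd_neg {i : ZMod 3} {m : ℤ} (hm : m % 2 ≠ 0) (h : ¬0 < m) : tau 3 i m = i + 1 := by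
  rcases tau_cases i m with ⟨_, _⟩ | ⟨_, _, _⟩ | ⟨_, _, ht⟩
  · omega
  · omega
  · exact ht

lemma tau_eq_self_of_even {i : ZMod 3} {m : ℤ} (hm : m % 2 = 0) : tau 3 i m = i := by
  simp [tau, hm]

lemma wordVar_ne_self (i : ZMod 3) (m : ℤ) : wordVar i m ≠ i := by
  unfold wordVar; split_ifs
  exacts [(zmod3_ne i).1.symm, (zmod3_ne i).2.1.symm]

lemma wordVar_ne_tau (i : ZMod 3) (m : ℤ) : wordVar i m ≠ tau 3 i m := by
  have := zmod3_ne i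
  unfold wordVar tau; split_ifs <;> simp_all [sub_eq_add_neg, (by decide : (-1 : ZMod 3) = 2),
    ne_comm]

lemma tau_ne_self_of_odd {i : ZMod 3} {m : ℤ} (hm : m % 2 ≠ 0) : tau 3 i m ≠ i := by
  have := zmod3_ne i
  unfold tau; split_ifs <;> simp_all [sub_eq_add_neg, (by decide : (-1 : ZMod 3) = 2), ne_comm]

def wordMonomial (i : ZMod 3) (m : ℤ) : ZMod 3 →₀ ℕ := Finsupp.single (wordVar i m) (m.natAbs / 2)

def wordSign (m : ℤ) : ℂ := (-1) ^ (m.natAbs + m.natAbs / 2)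

lemma wordSign_mul_self (m : ℤ) : wordSign m * wordSign m = 1 := by
  rw [wordSign, ← pow_add, ← two_mul, pow_mul]; norm_num

lemma wordVar_eq_iff {i : ZMod 3} {m m' : ℤ} : wordVar i m = wordVar i m' ↔ (0 < m ↔ 0 < m') := by
  have hne := zmod3_ne i
  unfold wordVar
  split_ifs <;> simp_all [hne.2.2.symm]
  omega

lemma word_eq_of_wordMonomial_eq {i : ZMod 3} {m m' : ℤ} (hm : tau 3 i m = tau 3 i m')
    (h : wordMonomial i m = wordMonomial i m') : m = m' := by
  have hne := zmod3_ne i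
  rw [wordMonomial, wordMonomial, Finsupp.single_eq_single_iff, wordVar_eq_iff] at h
  rcases tau_cases i m with ⟨hp, ht⟩ | ⟨hp, hs, ht⟩ | ⟨hp, hs, ht⟩ <;>
    rcases tau_cases i m' with ⟨hp', ht'⟩ | ⟨hp', hs', ht'⟩ | ⟨hp', hs', ht'⟩ <;>
    rw [ht, ht'] at hm <;> first | omega | simp_all

lemma wordMonomial_apply_eq_zero {i j : ZMod 3} {m : ℤ} (hm : tau 3 i m = j) :
    wordMonomial i m i = 0 ∧ wordMonomial i m j = 0 ∧
      (wordMonomial i m (i + 1) = 0 ∨ wordMonomial i m (i + 2) = 0) := by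
  have hne := zmod3_ne i
  refine ⟨Finsupp.single_eq_of_ne (wordVar_ne_self i m).symm,
    Finsupp.single_eq_of_ne (hm ▸ wordVar_ne_tau i m).symm, ?_⟩
  unfold wordMonomial wordVar
  split_ifs
  · exact Or.inr (Finsupp.single_eq_of_ne hne.2.2.symm)
  · exact Or.inl (Finsupp.single_eq_of_ne hne.2.2)

variable (hD hsum) in
/-- The image of a word of length `n` whose letters all act through `z_t`: the letters go to
`(z_t, -1)`, so two consecutive letters give multiplication by `-z_t`. -/
def powHom (i j t : ZMod 3) (n : ℕ) : MMaps (𝕋 i) (𝕋 j) :=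
  if Even n then homOf hD hsum i j ((-X t) ^ (n / 2)) ((-X t) ^ (n / 2)) 0 0
  else homOf hD hsum i j 0 0 (-(-X t) ^ (n / 2 + 1)) (-(-X t) ^ (n / 2))

variable (hD hsum) in
def wordHom (i j : ZMod 3) (m : ℤ) : MMaps (𝕋 i) (𝕋 j) :=
  powHom hD hsum i j (wordVar i m) m.natAbs

variable (hD hsum) in
def Phi (i j : ZMod 3) (x : AHom 3 ℂ i j) : MMaps (𝕋 i) (𝕋 j) :=
  x.sum fun b c => algebraMap ℂ R3 c • wordHom hD hsum i j b.1

lemma lead_powHom (i j t : ZMod 3) (n : ℕ) :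
    lead (powHom hD hsum i j t n) = (-1) ^ n * (-X t) ^ (n / 2) := by
  rcases Nat.even_or_odd n with hn | hn
  · simp [powHom, hn, hn.neg_one_pow]
  · simp [powHom, Nat.not_even_iff_odd.2 hn, hn.neg_one_pow]

lemma lead_mcomp_powHom (i j l s t : ZMod 3) (n₁ n₂ : ℕ) :
    lead (mcomp (powHom hD hsum j l s n₂) (powHom hD hsum i j t n₁)) =
      (-1) ^ (n₁ + n₂) * (-X s) ^ (n₂ / 2) * (-X t) ^ ((n₁ + n₂ % 2) / 2) := by
  rcases Nat.even_or_odd' n₁ with ⟨a, rfl | rfl⟩ <;>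
    rcases Nat.even_or_odd' n₂ with ⟨b, rfl | rfl⟩ <;>
    simp [powHom, mcomp_homOf, parity_simps, pow_add, pow_mul, Nat.mul_add_div, add_assoc]

lemma powHom_isCycle_of_even {i t : ZMod 3} {n : ℕ} (hn : Even n) :
    IsCycle (powHom hD hsum i i t n) := by
  rw [powHom, if_pos hn, isCycle_homOf_iff]
  exact ⟨mul_comm _ _, mul_comm _ _, by ring, by ring⟩

lemma powHom_isCycle_of_odd {i j t : ZMod 3} {n : ℕ} (hn : ¬Even n) (hij : i ≠ j) (hit : i ≠ t)
    (hjt : j ≠ t) : IsCycle (powHom hD hsum i j t n) := by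
  rw [powHom, if_neg hn, isCycle_homOf_iff, Xcompl_of_ne hij hit hjt,
    Xcompl_of_ne hij.symm hjt hit]
  exact ⟨by ring, by ring, by ring, by ring⟩

lemma wordHom_isCycle {i j : ZMod 3} {m : ℤ} (hm : tau 3 i m = j) :
    IsCycle (wordHom hD hsum i j m) := by
  by_cases hev : m % 2 = 0
  · rw [← hm, tau_eq_self_of_even hev]
    exact powHom_isCycle_of_even (Int.natAbs_even.2 (Int.even_iff.2 hev))
  · refine powHom_isCycle_of_odd (by rwa [Int.natAbs_even, Int.even_iff])
      (hm ▸ (tau_ne_self_of_odd hev).symm) (wordVar_ne_self i m).symm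
      (hm ▸ (wordVar_ne_tau i m).symm)

lemma lead_wordHom (i j : ZMod 3) (m : ℤ) :
    lead (wordHom hD hsum i j m) = monomial (wordMonomial i m) (wordSign m) := by
  have hC : ∀ k : ℕ, (-1 : R3) ^ k = C ((-1 : ℂ) ^ k) := fun k => by simp
  rw [wordHom, lead_powHom, wordMonomial, wordSign, neg_pow (X (wordVar i m) : R3),
    X_pow_eq_monomial, hC, hC, ← mul_assoc, ← map_mul, C_mul_monomial, mul_one, pow_add]

end Words

section PhiBasic

lemma Phi_single {i j : ZMod 3} (b : {c : ℤ // tau 3 i c = j}) (c : ℂ) :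
    Phi hD hsum i j (Finsupp.single b c) = algebraMap ℂ R3 c • wordHom hD hsum i j b.1 :=
  Finsupp.sum_single_index (by rw [map_zero, zero_smul])

lemma Phi_zero {i j : ZMod 3} : Phi hD hsum i j 0 = 0 := Finsupp.sum_zero_index

lemma Phi_add {i j : ZMod 3} (x y : AHom 3 ℂ i j) :
    Phi hD hsum i j (x + y) = Phi hD hsum i j x + Phi hD hsum i j y :=
  Finsupp.sum_add_index' (fun _ => by rw [map_zero, zero_smul])
    (fun _ _ _ => by rw [map_add, add_smul])

lemma Phi_smul {i j : ZMod 3} (c : ℂ) (x : AHom 3 ℂ i j) :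
    Phi hD hsum i j (c • x) = algebraMap ℂ R3 c • Phi hD hsum i j x := by
  rw [Phi, Finsupp.sum_smul_index' (fun _ => by rw [map_zero, zero_smul]), Phi, Finsupp.smul_sum]
  simp only [smul_eq_mul, map_mul, mul_smul]

lemma Phi_isCycle {i j : ZMod 3} (x : AHom 3 ℂ i j) : IsCycle (Phi hD hsum i j x) :=
  Submodule.finsuppSum_mem _ (cycles _ _) _ _ fun b _ =>
    Submodule.smul_mem _ _ (wordHom_isCycle b.2)

lemma lead_Phi {i j : ZMod 3} (x : AHom 3 ℂ i j) :
    lead (Phi hD hsum i j x) =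
      x.sum fun b c => monomial (wordMonomial i b.1) (c * wordSign b.1) := by
  simp only [Phi, map_finsuppSum, map_smul, smul_eq_mul, algebraMap_eq, lead_wordHom,
    C_mul_monomial]

lemma Phi_single_one {i j : ZMod 3} (b : {c : ℤ // tau 3 i c = j}) :
    Phi hD hsum i j (Finsupp.single b 1) = wordHom hD hsum i j b.1 := by
  rw [Phi_single, map_one, one_smul]

end PhiBasic

section Composition

lemma natAbs_of_cmul_eq_some {m₂ m₁ r : ℤ} (h : cmul m₂ m₁ = some r) :
    r.natAbs = m₁.natAbs + m₂.natAbs := by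
  simp only [cmul] at h
  split_ifs at h <;> simp only [Option.some.injEq] at h <;> omega

lemma wordVar_of_cmul_eq_some {i : ZMod 3} {m₂ m₁ r : ℤ} (h : cmul m₂ m₁ = some r)
    (h₁ : m₁ ≠ 0) (h₂ : m₂ ≠ 0) :
    wordVar (tau 3 i m₁) m₂ = wordVar i m₁ ∧ wordVar i r = wordVar i m₁ := by
  by_cases hc : 0 < m₂ ↔ ¬leftv m₁
  · rw [cmul, if_neg h₁, if_neg h₂, if_pos hc, Option.some.injEq] at h
    subst h
    unfold leftv at hc
    unfold wordVar tau
    split_ifs <;> first | (exfalso; omega) | (revert i; decide)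
  · rw [cmul, if_neg h₁, if_neg h₂, if_neg hc] at h
    cases h

lemma cmul_eq_none {i : ZMod 3} {m₂ m₁ : ℤ} (h : cmul m₂ m₁ = none) :
    m₁ ≠ 0 ∧ m₂ ≠ 0 ∧ wordVar (tau 3 i m₁) m₂ ≠ wordVar i m₁ := by
  have h₁ : m₁ ≠ 0 := by rintro rfl; simp [cmul_zero_right] at h
  have h₂ : m₂ ≠ 0 := by rintro rfl; simp [cmul_zero_left] at h
  have hc : ¬(0 < m₂ ↔ ¬leftv m₁) := fun hc => by
    rw [cmul, if_neg h₁, if_neg h₂, if_pos hc] at h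
    cases h
  refine ⟨h₁, h₂, ?_⟩
  unfold leftv at hc
  unfold wordVar tau
  split_ifs <;> first | (exfalso; omega) | (revert i; decide)

lemma lead_wordHom_of_cmul_eq_some {i l : ZMod 3} {m₂ m₁ r : ℤ} (h : cmul m₂ m₁ = some r) :
    lead (wordHom hD hsum i l r) =
      lead (mcomp (wordHom hD hsum (tau 3 i m₁) l m₂) (wordHom hD hsum i (tau 3 i m₁) m₁)) := by
  simp only [wordHom, lead_powHom, lead_mcomp_powHom, natAbs_of_cmul_eq_some h]
  rcases eq_or_ne m₁ 0 with rfl | h₁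
  · obtain rfl : m₂ = r := Option.some.inj ((cmul_zero_right m₂).symm.trans h)
    simp [tau_zero, Nat.div_eq_of_lt (Nat.mod_lt _ two_pos)]
  rcases eq_or_ne m₂ 0 with rfl | h₂
  · obtain rfl : m₁ = r := Option.some.inj ((cmul_zero_left m₁).symm.trans h)
    simp
  obtain ⟨hv₂, hvr⟩ := wordVar_of_cmul_eq_some h h₁ h₂
  rw [hv₂, hvr, mul_assoc, ← pow_add]
  congr 2
  omega

lemma lead_wordHom_mem_of_cmul_eq_none {i l : ZMod 3} {m₂ m₁ : ℤ} (h : cmul m₂ m₁ = none)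
    (hl : tau 3 (tau 3 i m₁) m₂ = l) :
    lead (mcomp (wordHom hD hsum (tau 3 i m₁) l m₂) (wordHom hD hsum i (tau 3 i m₁) m₁)) ∈
      cobIdeal i l := by
  obtain ⟨h₁, h₂, hv⟩ := cmul_eq_none (i := i) h
  set j := tau 3 i m₁
  set t₁ := wordVar i m₁
  set t₂ := wordVar j m₂
  have ht₁j : t₁ ≠ j := wordVar_ne_tau i m₁
  have ht₂j : t₂ ≠ j := wordVar_ne_self j m₂
  -- `t₁ ≠ t₂`; when one of the two exponents vanishes, the other variable is `z_l` or `z_i`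
  have hX : ∀ (t : ZMod 3) (e : ℕ), e ≠ 0 → X t ∣ (-X t : R3) ^ e :=
    fun t e he => dvd_pow (dvd_neg.2 dvd_rfl) he
  simp only [wordHom, lead_mcomp_powHom]
  by_cases he₂ : m₂.natAbs / 2 = 0
  · have hm₂ : m₂ % 2 ≠ 0 := by omega
    have ht₁l : t₁ = l := zmod3_eq_of_ne ht₂j.symm ht₁j hv.symm
      (hl ▸ tau_ne_self_of_odd hm₂) (hl ▸ (wordVar_ne_tau j m₂).symm)
    refine Ideal.mem_of_dvd _ ((hX t₁ _ (by omega)).mul_left _) ?_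
    exact ht₁l ▸ X_mem_cobIdeal_right i l
  by_cases he₁ : (m₁.natAbs + m₂.natAbs % 2) / 2 = 0
  · have hm₁ : m₁ % 2 ≠ 0 := by omega
    have hit₂ : i = t₂ := zmod3_eq_of_ne ht₁j.symm (tau_ne_self_of_odd hm₁).symm
      (wordVar_ne_self i m₁).symm ht₂j hv
    refine Ideal.mem_of_dvd _ (Dvd.dvd.mul_right ((hX t₂ _ he₂).mul_left _) _) ?_
    exact hit₂ ▸ X_mem_cobIdeal_left i l
  · exact Ideal.mem_of_dvd _ (mul_dvd_mul ((hX t₂ _ he₂).mul_left _) (hX t₁ _ he₁))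
      (X_mul_X_mem_cobIdeal hv i l)

lemma isCob_Phi_bm_sub_mcomp {i j l : ZMod 3} (b₂ : {c : ℤ // tau 3 j c = l})
    (b₁ : {c : ℤ // tau 3 i c = j}) :
    IsCob (Phi hD hsum i l (bm 3 ℂ i l b₂.1 b₁.1) -
      mcomp (wordHom hD hsum j l b₂.1) (wordHom hD hsum i j b₁.1)) := by
  have hcyc : IsCycle (Phi hD hsum i l (bm 3 ℂ i l b₂.1 b₁.1) -
      mcomp (wordHom hD hsum j l b₂.1) (wordHom hD hsum i j b₁.1)) :=
    (cycles _ _).sub_mem (Phi_isCycle _) ((wordHom_isCycle b₂.2).mcomp (wordHom_isCycle b₁.2))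
  rw [isCob_iff_lead_mem hcyc, map_sub]
  obtain ⟨m₁, rfl⟩ := b₁
  obtain ⟨m₂, rfl⟩ := b₂
  rcases hc : cmul m₂ m₁ with _ | r
  · rw [bm, hc, obm, Phi_zero, map_zero, zero_sub]
    exact neg_mem (lead_wordHom_mem_of_cmul_eq_none hc rfl)
  · rw [bm, hc, obm, dif_pos (tau_cmul i hc), Phi_single_one, lead_wordHom_of_cmul_eq_some hc,
      sub_self]
    exact zero_mem _

lemma isCob_Phi_comp {i j l : ZMod 3} (g : AHom 3 ℂ j l) (f : AHom 3 ℂ i j) :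
    IsCob (Phi hD hsum i l (Acomp 3 ℂ g f) - mcomp (Phi hD hsum j l g) (Phi hD hsum i j f)) := by
  induction f using Finsupp.induction_linear with
  | zero =>
    rw [Acomp_zero_right, Phi_zero, Phi_zero, mcomp_zero_right, sub_zero]
    exact zero_mem (coboundaries _ _)
  | add f f' hf hf' =>
    rw [Acomp_add_right, Phi_add, Phi_add, mcomp_add_right, add_sub_add_comm]
    exact (coboundaries _ _).add_mem hf hf'
  | single b₁ c₁ =>
    induction g using Finsupp.induction_linear with
    | zero =>
      rw [Acomp_zero_left, Phi_zero, Phi_zero, mcomp_zero_left, sub_zero]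
      exact zero_mem (coboundaries _ _)
    | add g g' hg hg' =>
      rw [Acomp_add_left, Phi_add, Phi_add, mcomp_add_left, add_sub_add_comm]
      exact (coboundaries _ _).add_mem hg hg'
    | single b₂ c₂ =>
      rw [Acomp_single_single, Phi_smul, Phi_single, Phi_single, mcomp_smul_left, mcomp_smul_right,
        smul_smul, ← map_mul, mul_comm]
      have := (coboundaries _ _).smul_mem (algebraMap ℂ R3 (c₁ * c₂))
        (isCob_Phi_bm_sub_mcomp (hD := hD) (hsum := hsum) b₂ b₁)
      rwa [smul_sub] at this

end Composition

section Bijectivity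

lemma coeff_lead_Phi {i j : ZMod 3} (x : AHom 3 ℂ i j) (b : {c : ℤ // tau 3 i c = j}) :
    coeff (wordMonomial i b.1) (lead (Phi hD hsum i j x)) = x b * wordSign b.1 := by
  rw [lead_Phi, Finsupp.sum, coeff_sum]
  simp only [coeff_monomial]
  rw [Finset.sum_eq_single b]
  · simp
  · intro b' _ hb'
    rw [if_neg fun h => hb' (Subtype.ext (word_eq_of_wordMonomial_eq (b'.2.trans b.2.symm) h))]
  · intro hb
    simp [Finsupp.notMem_support_iff.1 hb]

lemma coeff_eq_zero_of_mem_cobIdeal {i j : ZMod 3} {p : R3} (hp : p ∈ cobIdeal i j)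
    {μ : ZMod 3 →₀ ℕ} (hi : μ i = 0) (hj : μ j = 0) (h : μ (i + 1) = 0 ∨ μ (i + 2) = 0) :
    coeff μ p = 0 := by
  by_contra hμ
  obtain ⟨ν, hν, hle⟩ := mem_ideal_span_monomial_image.1 hp μ (mem_support_iff.2 hμ)
  simp only [Set.mem_insert_iff, Set.mem_singleton_iff] at hν
  have hle' := Finsupp.le_def.1 hle
  rcases hν with rfl | rfl | rfl
  · simpa [hi] using hle' i
  · simpa [hj] using hle' j
  · have hne := zmod3_ne i
    rcases h with h | h
    · simpa [h, hne.2.2] using hle' (i + 1)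
    · simpa [h, hne.2.2.symm] using hle' (i + 2)

theorem eq_zero_of_isCob_Phi {i j : ZMod 3} (x : AHom 3 ℂ i j) (h : IsCob (Phi hD hsum i j x)) :
    x = 0 := by
  ext b
  obtain ⟨hi, hj, h12⟩ := wordMonomial_apply_eq_zero b.2
  have := coeff_eq_zero_of_mem_cobIdeal (lead_mem_of_isCob h) hi hj h12
  rw [coeff_lead_Phi] at this
  exact (mul_eq_zero.1 this).resolve_right fun h0 => by simpa [h0] using wordSign_mul_self b.1

lemma eq_single_of_apply_eq_zero {s t u : ZMod 3} (hst : s ≠ t) (hsu : s ≠ u) (htu : t ≠ u)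
    {μ : ZMod 3 →₀ ℕ} (hs : μ s = 0) (ht : μ t = 0) : μ = Finsupp.single u (μ u) := by
  ext v
  by_cases hv : v = u
  · rw [hv, Finsupp.single_eq_same]
  · rw [Finsupp.single_eq_of_ne hv]
    rcases eq_or_ne v s with rfl | hvs
    · exact hs
    · rw [zmod3_eq_of_ne hsu hvs hv (Ne.symm hst) htu]
      exact ht

lemma exists_word_of_apply_eq_zero {i j : ZMod 3} {μ : ZMod 3 →₀ ℕ} (hi : μ i = 0) (hj : μ j = 0)
    (h : μ (i + 1) = 0 ∨ μ (i + 2) = 0) :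
    ∃ b : {c : ℤ // tau 3 i c = j}, wordMonomial i b.1 = μ := by
  have hne := zmod3_ne i
  rcases zmod3_cases i j with hj' | hj' | hj' <;> subst j
  · rcases h with h | h
    · rw [eq_single_of_apply_eq_zero hne.1 hne.2.1 hne.2.2 hi h]
      refine ⟨⟨-(2 * (μ (i + 2) : ℤ)), tau_eq_self_of_even (by omega)⟩, ?_⟩
      dsimp only
      rw [wordMonomial, wordVar, if_neg (by omega)]
      congr 1; omega
    · rw [eq_single_of_apply_eq_zero hne.2.1 hne.1 hne.2.2.symm hi h]
      refine ⟨⟨2 * (μ (i + 1) : ℤ), tau_eq_self_of_even (by omega)⟩, ?_⟩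
      dsimp only
      rcases Nat.eq_zero_or_pos (μ (i + 1)) with h0 | h0
      · simp [wordMonomial, h0]
      · rw [wordMonomial, wordVar, if_pos (by omega)]
        congr 1; omega
  · rw [eq_single_of_apply_eq_zero hne.1 hne.2.1 hne.2.2 hi hj]
    refine ⟨⟨-(2 * (μ (i + 2) : ℤ) + 1), tau_of_odd_neg (by omega) (by omega)⟩, ?_⟩
    dsimp only
    rw [wordMonomial, wordVar, if_neg (by omega)]
    congr 1; omega
  · rw [eq_single_of_apply_eq_zero hne.2.1 hne.1 hne.2.2.symm hi hj]
    refine ⟨⟨2 * (μ (i + 1) : ℤ) + 1, tau_of_odd_pos (by omega) (by omega)⟩, ?_⟩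
    dsimp only
    rw [wordMonomial, wordVar, if_pos (by omega)]
    congr 1; omega

theorem exists_sub_lead_Phi_mem {i j : ZMod 3} (p : R3) :
    ∃ x : AHom 3 ℂ i j, p - lead (Phi hD hsum i j x) ∈ cobIdeal i j := by
  induction p using MvPolynomial.induction_on' with
  | monomial μ a =>
    by_cases hμ : μ i = 0 ∧ μ j = 0 ∧ (μ (i + 1) = 0 ∨ μ (i + 2) = 0)
    · obtain ⟨b, hb⟩ := exists_word_of_apply_eq_zero hμ.1 hμ.2.1 hμ.2.2
      refine ⟨Finsupp.single b (a * wordSign b.1), ?_⟩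
      rw [lead_Phi, Finsupp.sum_single_index (by simp), hb, mul_assoc, wordSign_mul_self, mul_one,
        sub_self]
      exact zero_mem _
    · refine ⟨0, ?_⟩
      rw [Phi_zero, map_zero, sub_zero]
      refine mem_ideal_span_monomial_image.2 fun ν hν => ?_
      rw [Finset.mem_singleton.1 (support_monomial_subset hν)]
      simp only [Set.mem_insert_iff, Set.mem_singleton_iff, exists_eq_or_imp, exists_eq_left,
        Finsupp.single_le_iff]
      by_cases hi : μ i = 0
      · by_cases hj : μ j = 0
        · have h12 : μ (i + 1) ≠ 0 ∧ μ (i + 2) ≠ 0 := by tauto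
          have hne := zmod3_ne i
          refine Or.inr (Or.inr (Finsupp.le_def.2 fun v => ?_))
          rcases zmod3_cases i v with rfl | rfl | rfl <;>
            simp [hne, hne.2.2.symm] <;> omega
        · exact Or.inr (Or.inl (by omega))
      · exact Or.inl (by omega)
  | add p q hp hq =>
    obtain ⟨x, hx⟩ := hp
    obtain ⟨y, hy⟩ := hq
    exact ⟨x + y, by rw [Phi_add, map_add, add_sub_add_comm]; exact add_mem hx hy⟩

theorem exists_isCob_sub_Phi {i j : ZMod 3} (z : MMaps (𝕋 i) (𝕋 j)) (hz : IsCycle z) :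
    ∃ x, IsCob (z - Phi hD hsum i j x) := by
  obtain ⟨x, hx⟩ := exists_sub_lead_Phi_mem (hD := hD) (hsum := hsum) (j := j) (lead z)
  exact ⟨x, (isCob_iff_lead_mem ((cycles _ _).sub_mem hz (Phi_isCycle x))).2 (by rwa [map_sub])⟩

end Bijectivity

section Grading

abbrev pDeg (D : ℕ) (d : ZMod 3 → ℤ) : ZMod 3 → ℤ := fun i => 2 * d i + 2 * d (i + 1) - (D : ℤ)

/-- The paper's `q_i = 2d_{i-2} + 2d_{i-1} - D`, indices mod 3. -/
abbrev qDeg (D : ℕ) (d : ZMod 3 → ℤ) : ZMod 3 → ℤ :=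
  fun i => 2 * d (i + 1) + 2 * d (i + 2) - (D : ℤ)

lemma wt_add_wt_add_wt (hD : 1 ≤ D) (hsum : d 0 + d 1 + d 2 = (D : ℤ)) (i : ZMod 3) :
    wt D d i + wt D d (i + 1) + wt D d (i + 2) = 2 := by
  have hD0 : (D : ℚ) ≠ 0 := Nat.cast_ne_zero.2 (by omega)
  have hs : (d i : ℚ) + d (i + 1) + d (i + 2) = D := by exact_mod_cast dtriple D d hsum i
  simp only [wt]
  field_simp
  linear_combination hs

lemma deg_div_eq (hD : 1 ≤ D) (hsum : d 0 + d 1 + d 2 = (D : ℤ)) (i : ZMod 3) (m : ℤ) :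
    (deg (pDeg D d) (qDeg D d) i m : ℚ) / D =
      (m.natAbs / 2 : ℕ) * wt D d (wordVar i m) + if m % 2 = 0 then 0 else 1 - wt D d i := by
  have hD0 : (D : ℚ) ≠ 0 := Nat.cast_ne_zero.2 (by omega)
  have hs : (d i : ℚ) + d (i + 1) + d (i + 2) = D := by exact_mod_cast dtriple D d hsum i
  have h11 : i + 1 + 1 = i + 2 := by ring
  unfold deg wordVar wt
  by_cases hpos : 0 < m <;> by_cases hpar : m % 2 = 0 <;>
    simp only [pDeg, qDeg, hpos, hpar, if_true, if_false, h11, zmod3_add_one_add_two]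
  · rw [show (m.natAbs + 1) / 2 = m.natAbs / 2 by omega]
    generalize m.natAbs / 2 = a
    field_simp; push_cast; linear_combination (2 * (a : ℚ)) * hs
  · rw [show (m.natAbs + 1) / 2 = m.natAbs / 2 + 1 by omega]
    generalize m.natAbs / 2 = a
    field_simp; push_cast; linear_combination (2 * (a : ℚ) + 2) * hs
  · rw [show (m.natAbs + 1) / 2 = m.natAbs / 2 by omega]
    generalize m.natAbs / 2 = a
    field_simp; push_cast; linear_combination (2 * (a : ℚ)) * hs
  · rw [show (m.natAbs + 1) / 2 = m.natAbs / 2 + 1 by omega]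
    generalize m.natAbs / 2 = a
    field_simp; push_cast; linear_combination (2 * (a : ℚ) + 2) * hs

lemma eq_of_mem_grQ {p q : ZMod 3 → ℤ} {i j : ZMod 3} {γ : ℚ × ZMod 2} {x : AHom 3 ℂ i j}
    (hx : x ∈ grQ D p q i j γ) {b : {c : ℤ // tau 3 i c = j}} (hb : x b ≠ 0) :
    ((deg p q i b.1 : ℚ) / D, par b.1) = γ :=
  (Finsupp.mem_supported ℂ x).1 hx (Finsupp.mem_support_iff.2 hb)

lemma emod_two_eq_zero_of_par_eq_zero {m : ℤ} (h : par m = 0) : m % 2 = 0 :=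
  Int.emod_eq_zero_of_dvd ((ZMod.intCast_zmod_eq_zero_iff_dvd m 2).1 h)

lemma emod_two_ne_zero_of_par_eq_one {m : ℤ} (h : par m = 1) : m % 2 ≠ 0 := fun h0 => by
  have := (ZMod.intCast_zmod_eq_zero_iff_dvd m 2).2 (Int.dvd_of_emod_eq_zero h0)
  rw [← par, h] at this
  exact one_ne_zero this

lemma wt_add_wt_add_wt_of_ne (hD : 1 ≤ D) (hsum : d 0 + d 1 + d 2 = (D : ℤ)) {i j t : ZMod 3}
    (hij : i ≠ j) (hit : i ≠ t) (hjt : j ≠ t) :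
    wt D d i + wt D d j + wt D d t = 2 := by
  rcases zmod3_eq_or_eq_of_ne hij hit hjt with ⟨rfl, rfl⟩ | ⟨rfl, rfl⟩
  · exact wt_add_wt_add_wt hD hsum i
  · linear_combination wt_add_wt_add_wt hD hsum i

lemma wordHom_mem_evenHomog {i : ZMod 3} {m : ℤ} (hm : m % 2 = 0) :
    wordHom hD hsum i i m ∈
      evenHomog D d (𝕋 i) (𝕋 i) ((deg (pDeg D d) (qDeg D d) i m : ℚ) / D) := by
  have hmem := negX_pow_mem_Rgr (D := D) (d := d) (wordVar i m) (m.natAbs / 2)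
  rw [deg_div_eq hD hsum, if_pos hm, add_zero]
  rw [wordHom, powHom, if_pos (Int.natAbs_even.2 (Int.even_iff.2 hm))]
  refine ⟨⟨?_, ?_⟩, (Submodule.mem_bot ℂ).2 (homOf_snd_eq_zero.2 ⟨rfl, rfl⟩)⟩ <;> unfold homOf <;>
    exact mulMap_mem_homogMaps (by rfl) (by rwa [add_sub_cancel_right])

lemma wordHom_mem_oddHomog {i j : ZMod 3} {m : ℤ} (hm : m % 2 ≠ 0) (hj : tau 3 i m = j) :
    wordHom hD hsum i j m ∈
      oddHomog D d (𝕋 i) (𝕋 j) ((deg (pDeg D d) (qDeg D d) i m : ℚ) / D) := by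
  have hwt := wt_add_wt_add_wt_of_ne hD hsum (hj ▸ (tau_ne_self_of_odd hm).symm)
    (wordVar_ne_self i m).symm (hj ▸ (wordVar_ne_tau i m).symm)
  rw [deg_div_eq hD hsum, if_neg hm]
  rw [wordHom, powHom, if_neg (by rwa [Int.natAbs_even, Int.even_iff])]
  refine ⟨(Submodule.mem_bot ℂ).2 (homOf_fst_eq_zero.2 ⟨rfl, rfl⟩), ?_, ?_⟩ <;>
    rw [TT_σ₁, TT_σ₀] <;> unfold homOf <;> refine mulMap_mem_homogMaps (by rfl) ?_
  · convert Submodule.neg_mem _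
      (negX_pow_mem_Rgr (D := D) (d := d) (wordVar i m) (m.natAbs / 2 + 1)) using 2
    push_cast
    linear_combination -hwt
  · convert Submodule.neg_mem _
      (negX_pow_mem_Rgr (D := D) (d := d) (wordVar i m) (m.natAbs / 2)) using 2
    ring

lemma Phi_mem_evenHomog {i j : ZMod 3} {γ : ℚ} {x : AHom 3 ℂ i j}
    (hx : x ∈ grQ D (pDeg D d) (qDeg D d) i j (γ, 0)) :
    Phi hD hsum i j x ∈ evenHomog D d (𝕋 i) (𝕋 j) γ := by
  refine Submodule.finsuppSum_mem _ _ _ _ fun b hb => ?_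
  obtain ⟨hdeg, hpar⟩ := Prod.mk.inj (eq_of_mem_grQ hx hb)
  obtain ⟨m, hm⟩ := b
  have hm₂ := emod_two_eq_zero_of_par_eq_zero hpar
  obtain rfl : i = j := (tau_eq_self_of_even hm₂).symm.trans hm
  rw [algebraMap_smul]
  exact Submodule.smul_mem _ _ (hdeg ▸ wordHom_mem_evenHomog hm₂)

lemma Phi_mem_oddHomog {i j : ZMod 3} {γ : ℚ} {x : AHom 3 ℂ i j}
    (hx : x ∈ grQ D (pDeg D d) (qDeg D d) i j (γ, 1)) :
    Phi hD hsum i j x ∈ oddHomog D d (𝕋 i) (𝕋 j) γ := by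
  refine Submodule.finsuppSum_mem _ _ _ _ fun b hb => ?_
  obtain ⟨hdeg, hpar⟩ := Prod.mk.inj (eq_of_mem_grQ hx hb)
  rw [algebraMap_smul]
  exact Submodule.smul_mem _ _
    (hdeg ▸ wordHom_mem_oddHomog (emod_two_ne_zero_of_par_eq_one hpar) b.2)

end Grading

section Generators

lemma Phi_Aid (i : ZMod 3) : Phi hD hsum i i (Aid 3 ℂ i) = idMS (𝕋 i) := by
  rw [Aid, Phi_single_one]
  simp [wordHom, powHom, homOf, idMS]

lemma Phi_uElem (i : ZMod 3) :
    Phi hD hsum i (i + 1) (uElem 3 ℂ i) =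
      ((0, uMF D d hD hsum i) : MMaps (𝕋 i) (𝕋 (i + 1))) := by
  rw [uElem, Phi_single_one]
  simp [wordHom, powHom, wordVar, homOf, uMF]

lemma Phi_vElem (i : ZMod 3) :
    Phi hD hsum i (i - 1) (vElem 3 ℂ i) =
      ((0, vMF D d hD hsum i) : MMaps (𝕋 i) (𝕋 (i - 1))) := by
  rw [vElem, Phi_single_one]
  simp [wordHom, powHom, wordVar, homOf, vMF]

end Generators

end MatrixFactorizations

/-- Homological mirror symmetry ingredient (Proposition 6.2 of the paper): for
`d₁ + d₂ + d₃ = D ≥ 1`, setting `pᵢ = 2dᵢ + 2d_{i+1} - D` and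
`qᵢ = 2d_{i-2} + 2d_{i-1} - D`, there is an equivalence of `(1/D)ℤ`-graded
categories `A_{(p̃,q̃)} ≅ H^*(C_{d₁,d₂,d₃})` onto the cohomology category of the
DG category of `(1/D)ℤ`-graded matrix factorizations of `W = z₁z₂z₃` on the objects
`T₁, T₂, T₃`, sending `X_i` to `T_i`, `u_{i-1,i}` to the class of the odd closed
morphism with components (multiplication by `z_{i+1}`, multiplication by `-1`), and
`v_{i,i-1}` to the class of the odd closed morphism with components (multiplication
by `z_{i-2}`, multiplication by `-1`).  The equivalence is expressed by a linear map
`Φ` from the hom spaces of `A` to closed morphisms of matrix factorizations which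
preserves degrees and parities, identities and compositions up to coboundaries, and
induces a bijection on cohomology. -/
theorem stmt_12 (D : ℕ) (hD : 1 ≤ D) (d : ZMod 3 → ℤ)
    (hsum : d 0 + d 1 + d 2 = (D : ℤ)) :
    ∃ Φ : ∀ i j : ZMod 3, AHom 3 ℂ i j → MMaps (TT D d hD hsum i) (TT D d hD hsum j),
      (∀ (i j : ZMod 3) (x y : AHom 3 ℂ i j), Φ i j (x + y) = Φ i j x + Φ i j y) ∧
      (∀ (i j : ZMod 3) (c : ℂ) (x : AHom 3 ℂ i j),
        Φ i j (c • x) = (algebraMap ℂ R3 c) • Φ i j x) ∧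
      (∀ (i j : ZMod 3) (x : AHom 3 ℂ i j), IsCycle (Φ i j x)) ∧
      (∀ (i j : ZMod 3) (γ : ℚ) (x : AHom 3 ℂ i j),
        x ∈ grQ D (fun i' => 2 * d i' + 2 * d (i' + 1) - (D : ℤ))
          (fun i' => 2 * d (i' + 1) + 2 * d (i' + 2) - (D : ℤ)) i j (γ, 0) →
        (Φ i j x).2 = 0 ∧
        IsHomogMap (D := D) (d := d) (TT D d hD hsum i).σ₁ (TT D d hD hsum j).σ₁ γ (Φ i j x).1.1 ∧
        IsHomogMap (D := D) (d := d) (TT D d hD hsum i).σ₀ (TT D d hD hsum j).σ₀ γ (Φ i j x).1.2) ∧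
      (∀ (i j : ZMod 3) (γ : ℚ) (x : AHom 3 ℂ i j),
        x ∈ grQ D (fun i' => 2 * d i' + 2 * d (i' + 1) - (D : ℤ))
          (fun i' => 2 * d (i' + 1) + 2 * d (i' + 2) - (D : ℤ)) i j (γ, 1) →
        (Φ i j x).1 = 0 ∧
        IsHomogMap (D := D) (d := d) (TT D d hD hsum i).σ₁ (TT D d hD hsum j).σ₀ γ (Φ i j x).2.1 ∧
        IsHomogMap (D := D) (d := d) (TT D d hD hsum i).σ₀ (TT D d hD hsum j).σ₁ γ (Φ i j x).2.2) ∧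
      (∀ i : ZMod 3, IsCob (Φ i i (Aid 3 ℂ i) - idMS (TT D d hD hsum i))) ∧
      (∀ (i j l : ZMod 3) (g : AHom 3 ℂ j l) (f : AHom 3 ℂ i j),
        IsCob (Φ i l (Acomp 3 ℂ g f) - mcomp (Φ j l g) (Φ i j f))) ∧
      (∀ i : ZMod 3,
        IsCob (Φ i (i + 1) (uElem 3 ℂ i) - ((0, uMF D d hD hsum i) :
          MMaps (TT D d hD hsum i) (TT D d hD hsum (i + 1))))) ∧
      (∀ i : ZMod 3,
        IsCob (Φ i (i - 1) (vElem 3 ℂ i) - ((0, vMF D d hD hsum i) :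
          MMaps (TT D d hD hsum i) (TT D d hD hsum (i - 1))))) ∧
      (∀ (i j : ZMod 3) (x : AHom 3 ℂ i j), IsCob (Φ i j x) → x = 0) ∧
      (∀ (i j : ZMod 3) (z : MMaps (TT D d hD hsum i) (TT D d hD hsum j)),
        IsCycle z → ∃ x : AHom 3 ℂ i j, IsCob (z - Φ i j x)) := by
  refine ⟨Phi hD hsum, fun i j => Phi_add, fun i j => Phi_smul, fun i j => Phi_isCycle,
    fun i j γ x hx => ?_, fun i j γ x hx => ?_, fun i => ?_, fun i j l => isCob_Phi_comp,
    fun i => ?_, fun i => ?_, fun i j => eq_zero_of_isCob_Phi, fun i j => exists_isCob_sub_Phi⟩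
  · obtain ⟨⟨h₁, h₀⟩, h⟩ := Phi_mem_evenHomog (hD := hD) (hsum := hsum) hx
    exact ⟨(Submodule.mem_bot ℂ).1 h, h₁, h₀⟩
  · obtain ⟨h, h₁, h₀⟩ := Phi_mem_oddHomog (hD := hD) (hsum := hsum) hx
    exact ⟨(Submodule.mem_bot ℂ).1 h, h₁, h₀⟩
  · rw [Phi_Aid, sub_self]
    exact zero_mem (coboundaries _ _)
  · rw [Phi_uElem, sub_self]
    exact zero_mem (coboundaries _ _)
  · rw [Phi_vElem, sub_self]
    exact zero_mem (coboundaries _ _)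

end Stmt12
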